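/- arXiv:1807.04654 — 3 statements merged into one kernel-verified Lean document; each statement's English description precedes it below -/
import Mathlib

section
/- Let 𝐆 be a topological group whose underlying topological space is homeomorphic to a Cantor set. Then there exists a minimal Cantor ℤ-system (X,S,ℤ) such that 𝐆 is isomorphic (as an abstract group) to a subgroup of Aut(S,ℤ). -/
open TopologicalSpace

/-- The group of self-homeomorphisms of a space, with `(f * g) x = f (g x)`. -/
instance homeoGroup {X : Type*} [TopologicalSpace X] : Group (X ≃ₜ X) where
  mul f g := g.trans f
  one := Homeomorph.refl X
  inv := Homeomorph.symm
  mul_assoc _ _ _ := Homeomorph.ext fun _ => rfl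
  one_mul _ := Homeomorph.ext fun _ => rfl
  mul_one _ := Homeomorph.ext fun _ => rfl
  inv_mul_cancel f := Homeomorph.ext fun x => f.symm_apply_apply x

/-- A Cantor `ℤ`-system: a homeomorphism of a Cantor set (a nonempty compact metrizable
totally disconnected perfect space). -/
structure CantorZSys where
  X : Type
  [topX : TopologicalSpace X]
  [compactX : CompactSpace X]
  [metrX : MetrizableSpace X]
  [tdX : TotallyDisconnectedSpace X]
  [perfX : PerfectSpace X]
  [neX : Nonempty X]
  S : X ≃ₜ X

attribute [instance] CantorZSys.topX CantorZSys.compactX CantorZSys.metrX CantorZSys.tdX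
  CantorZSys.perfX CantorZSys.neX

set_option linter.unusedSectionVars false
namespace CantorEmbedAux

/-- Bundled construction data: a decreasing neighborhood basis of open normal subgroups,
together with, at each level, a finite family of "coset representatives". -/
structure Datum (G : Type) [Group G] [TopologicalSpace G] where
  N : ℕ → Subgroup G
  Nopen : ∀ k, IsOpen (N k : Set G)
  Nnormal : ∀ k, (N k).Normal
  Nanti : ∀ k, N (k + 1) ≤ N k
  Nbasis : ∀ U ∈ nhds (1 : G), ∃ k, (N k : Set G) ⊆ U
  m : ℕ → ℤ
  mtwo : ∀ k, 2 ≤ m k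
  c : ℕ → ℤ → G
  czero : ∀ k, c k 0 = 1
  ccover : ∀ k (g : G), ∃ j, 0 ≤ j ∧ j < m k ∧ (c k j)⁻¹ * g ∈ N k

variable {G : Type} [Group G] [TopologicalSpace G] [IsTopologicalGroup G]
  [CompactSpace G] [MetrizableSpace G] [TotallyDisconnectedSpace G]

/-- Partial intersections of a sequence of subgroups. -/
def chain (M : ℕ → Subgroup G) : ℕ → Subgroup G
  | 0 => M 0
  | (k + 1) => chain M k ⊓ M (k + 1)

theorem exists_openNormal_sub {U : Set G} (hU : U ∈ nhds (1 : G)) :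
    ∃ N : Subgroup G, N.Normal ∧ IsOpen (N : Set G) ∧ (N : Set G) ⊆ U := by
  rcases mem_nhds_iff.1 hU with ⟨V, hVU, hVopen, h1V⟩
  rcases compact_exists_isClopen_in_isOpen hVopen h1V with ⟨W, hW, h1W, hWV⟩
  rcases IsTopologicalGroup.exist_openNormalSubgroup_sub_clopen_nhds_of_one hW h1W with ⟨H, hH⟩
  exact ⟨H.toSubgroup, H.isNormal', H.isOpen', fun x hx => hVU (hWV (hH hx))⟩

theorem exists_cover (N : Subgroup G) (hN : IsOpen (N : Set G)) :
    ∃ T : Finset G, ∀ g : G, ∃ h ∈ T, h⁻¹ * g ∈ N := by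
  have hcov : (Set.univ : Set G) ⊆ ⋃ h : G, (fun x => h * x) '' (N : Set G) := by
    intro g _
    exact Set.mem_iUnion.2 ⟨g, 1, N.one_mem, by simp⟩
  rcases IsCompact.elim_finite_subcover isCompact_univ
      (fun h : G => (fun x => h * x) '' (N : Set G))
      (fun h => (Homeomorph.mulLeft h).isOpenMap _ hN) hcov with ⟨T, hT⟩
  refine ⟨T, fun g => ?_⟩
  rcases Set.mem_iUnion₂.1 (hT (Set.mem_univ g)) with ⟨h, hhT, x, hxN, hxg⟩
  exact ⟨h, hhT, by rw [← hxg]; simpa using hxN⟩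

theorem exists_datum : Nonempty (Datum G) := by
  classical
  -- countable antitone basis of neighborhoods of 1
  obtain ⟨U, hU⟩ := (nhds (1 : G)).exists_antitone_basis
  -- open normal subgroups inside each U k
  choose M hMnormal hMopen hMsub using fun k => exists_openNormal_sub (hU.mem k)
  -- decreasing chain
  set N : ℕ → Subgroup G := chain M with hN
  have hNsucc : ∀ k, N (k + 1) = N k ⊓ M (k + 1) := fun k => rfl
  have hNopen : ∀ k, IsOpen (N k : Set G) := by
    intro k
    induction k with
    | zero => exact hMopen 0
    | succ k ih =>
      rw [hNsucc, Subgroup.coe_inf]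
      exact ih.inter (hMopen (k + 1))
  have hNnormal : ∀ k, (N k).Normal := by
    intro k
    induction k with
    | zero => exact hMnormal 0
    | succ k ih =>
      constructor
      intro n hn g
      exact ⟨ih.conj_mem _ hn.1 g, (hMnormal (k + 1)).conj_mem _ hn.2 g⟩
  have hNanti : ∀ k, N (k + 1) ≤ N k := fun k => inf_le_left
  have hNM : ∀ k, N k ≤ M k := by
    intro k
    cases k with
    | zero => exact le_rfl
    | succ k => exact inf_le_right
  -- coset representatives
  choose T hT using fun k => exists_cover (N k) (hNopen k)
  let lst : ℕ → List G := fun k => 1 :: (T k).toList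
  refine ⟨⟨N, hNopen, hNnormal, hNanti, ?_, fun k => ((lst k).length : ℤ) + 1, ?_, 
      fun k j => (lst k).getD j.toNat 1, ?_, ?_⟩⟩
  · intro V hV
    rcases hU.toHasBasis.mem_iff.1 hV with ⟨k, -, hk⟩
    exact ⟨k, fun x hx => hk (hMsub k (hNM k hx))⟩
  · intro k
    show (2 : ℤ) ≤ ((lst k).length : ℤ) + 1
    have : 1 ≤ (lst k).length := by simp [lst]
    omega
  · intro k; rfl
  · intro k g
    rcases hT k g with ⟨h, hhT, hhg⟩
    have hmem : h ∈ lst k := List.mem_cons_of_mem _ (Finset.mem_toList.2 hhT)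
    have hlt : (lst k).idxOf h < (lst k).length := List.idxOf_lt_length_iff.2 hmem
    refine ⟨((lst k).idxOf h : ℤ), Int.natCast_nonneg _, ?_, ?_⟩
    · show ((lst k).idxOf h : ℤ) < ((lst k).length : ℤ) + 1
      omega
    · show ((lst k).getD (((lst k).idxOf h : ℤ)).toNat 1)⁻¹ * g ∈ N k
      rw [Int.toNat_natCast, List.getD_eq_getElem _ _ hlt, List.getElem_idxOf hlt]
      exact hhg

variable (D : Datum G)

/-- Lengths of the hierarchical words. -/
def len : ℕ → ℤ
  | 0 => 1
  | (k + 1) => D.m k * len k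

/-- The hierarchical words: `W (k+1)` is the concatenation of the left translates of `W k`
by the representatives `c k j`, `j = 0, 1, ..., m k - 1`. -/
def Wd : ℕ → ℤ → G
  | 0, _ => 1
  | (k + 1), i => D.c k (i / len D k) * Wd k (i % len D k)

theorem len_pos : ∀ k, 0 < len D k
  | 0 => one_pos
  | (k + 1) => mul_pos (lt_of_lt_of_le two_pos (D.mtwo k)) (len_pos k)

theorem len_le_double : ∀ k, 2 * len D k ≤ len D (k + 1) := fun k =>
  mul_le_mul_of_nonneg_right (D.mtwo k) (le_of_lt (len_pos D k))

theorem len_mono : ∀ {n K : ℕ}, n ≤ K → len D n ≤ len D K := by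
  intro n K h
  induction K with
  | zero => cases Nat.le_zero.1 h; exact le_rfl
  | succ K ih =>
    rcases Nat.lt_or_ge n (K + 1) with h' | h'
    · calc len D n ≤ len D K := ih (Nat.lt_succ_iff.1 h')
        _ ≤ 2 * len D K := by linarith [len_pos D K]
        _ ≤ len D (K + 1) := len_le_double D K
    · have : n = K + 1 := le_antisymm h h'
      rw [this]

theorem len_strict_mono {n K : ℕ} (h : n < K) : len D n < len D K := by
  have h1 : len D n < 2 * len D n := by linarith [len_pos D n]
  calc len D n < 2 * len D n := h1
    _ ≤ len D (n + 1) := len_le_double D n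
    _ ≤ len D K := len_mono D h

theorem len_big : ∀ k : ℕ, (k : ℤ) + 1 ≤ len D k := by
  intro k
  induction k with
  | zero => simp [len]
  | succ k ih =>
    have := len_le_double D k
    have := len_pos D k
    push_cast
    linarith

/-- `W n` is a prefix of `W K` for `n ≤ K`. -/
theorem Wd_prefix {n K : ℕ} (h : n ≤ K) {s : ℤ} (hs0 : 0 ≤ s) (hs : s < len D n) :
    Wd D K s = Wd D n s := by
  induction K with
  | zero => cases Nat.le_zero.1 h; rfl
  | succ K ih =>
    rcases Nat.lt_or_ge n (K + 1) with h' | h'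
    · have hn : n ≤ K := Nat.lt_succ_iff.1 h'
      have hlen : s < len D K := lt_of_lt_of_le hs (len_mono D hn)
      show D.c K (s / len D K) * Wd D K (s % len D K) = Wd D n s
      rw [Int.ediv_eq_zero_of_lt hs0 hlen, Int.emod_eq_of_lt hs0 hlen, D.czero, one_mul]
      exact ih hn
    · have : n = K + 1 := le_antisymm h h'
      rw [this]

theorem len_dvd {K M : ℕ} (h : K ≤ M) : ∃ d : ℤ, 0 < d ∧ len D M = d * len D K := by
  induction M with
  | zero => cases Nat.le_zero.1 h; exact ⟨1, one_pos, (one_mul _).symm⟩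
  | succ M ih =>
    rcases Nat.lt_or_ge K (M + 1) with h' | h'
    · rcases ih (Nat.lt_succ_iff.1 h') with ⟨d, hd, hdeq⟩
      refine ⟨D.m M * d, mul_pos (lt_of_lt_of_le two_pos (D.mtwo M)) hd, ?_⟩
      show D.m M * len D M = D.m M * d * len D K
      rw [hdeq, mul_assoc]
    · have : K = M + 1 := le_antisymm h h'
      rw [this]; exact ⟨1, one_pos, (one_mul _).symm⟩

theorem Nle : ∀ {K k : ℕ}, k ≤ K → D.N K ≤ D.N k := by
  intro K
  induction K with
  | zero =>
    intro k h
    cases Nat.le_zero.1 h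
    exact le_rfl
  | succ K ih =>
    intro k h
    rcases Nat.lt_or_ge k (K + 1) with h' | h'
    · exact le_trans (D.Nanti K) (ih (Nat.lt_succ_iff.1 h'))
    · have : k = K + 1 := le_antisymm h h'
      rw [this]

/-- Aligned block decomposition: every aligned `len K`-block of `W M` is a left translate
of `W K`. -/
theorem exists_block (K : ℕ) : ∀ M : ℕ, K ≤ M → ∀ t : ℤ, 0 ≤ t →
    (t + 1) * len D K ≤ len D M →
    ∃ c' : G, ∀ s : ℤ, 0 ≤ s → s < len D K →
      Wd D M (t * len D K + s) = c' * Wd D K s := by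
  intro M
  induction M with
  | zero =>
    intro h t ht hb
    cases Nat.le_zero.1 h
    have hK := len_pos D 0
    have ht0 : t = 0 := by nlinarith
    refine ⟨1, fun s hs0 hs1 => ?_⟩
    rw [ht0, one_mul, zero_mul, zero_add]
  | succ M ih =>
    intro h t ht hb
    rcases Nat.lt_or_ge K (M + 1) with h' | h'
    · have hKM : K ≤ M := Nat.lt_succ_iff.1 h'
      rcases len_dvd D hKM with ⟨d, hd, hdeq⟩
      set j := t / d with hj
      set t' := t % d with ht'
      have hjt : d * j + t' = t := Int.mul_ediv_add_emod t d
      have ht'0 : 0 ≤ t' := Int.emod_nonneg t (ne_of_gt hd)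
      have ht'd : t' < d := Int.emod_lt_of_pos t hd
      have hKpos := len_pos D K
      have hMpos := len_pos D M
      have hb' : (t' + 1) * len D K ≤ len D M := by
        rw [hdeq]
        have : t' + 1 ≤ d := by omega
        exact mul_le_mul_of_nonneg_right this (le_of_lt hKpos)
      rcases ih hKM t' ht'0 hb' with ⟨c'', hc''⟩
      refine ⟨D.c M j * c'', fun s hs0 hs1 => ?_⟩
      have key : t * len D K + s = (t' * len D K + s) + j * len D M := by
        rw [hdeq]; nlinarith [hjt]
      have hu0 : 0 ≤ t' * len D K + s := by positivity
      have hu1 : t' * len D K + s < len D M := by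
        rw [hdeq]; nlinarith
      show D.c M ((t * len D K + s) / len D M) *
          Wd D M ((t * len D K + s) % len D M) = D.c M j * c'' * Wd D K s
      have hediv : (t * len D K + s) / len D M = j := by
        rw [key, Int.add_mul_ediv_right _ _ (ne_of_gt hMpos)]
        rw [Int.ediv_eq_zero_of_lt hu0 hu1, zero_add]
      have hemod : (t * len D K + s) % len D M = t' * len D K + s := by
        rw [key, Int.add_mul_emod_self_right]
        exact Int.emod_eq_of_lt hu0 hu1
      rw [hediv, hemod, hc'' s hs0 hs1, mul_assoc]
    · have : K = M + 1 := le_antisymm h h'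
      subst this
      have hK := len_pos D (M + 1)
      have ht0 : t = 0 := by nlinarith
      refine ⟨1, fun s hs0 hs1 => ?_⟩
      rw [ht0, one_mul, zero_mul, zero_add]

/-- Every translate class (mod `N k`) of the word `W n` occurs in `W (K+1)`. -/
theorem exists_occurrence {k n K : ℕ} (hk : k ≤ K) (hn : n ≤ K) (f : G) :
    ∃ (r : ℤ) (ch : G), 0 ≤ r ∧ r + len D n ≤ len D (K + 1) ∧ f⁻¹ * ch ∈ D.N k ∧
      ∀ s : ℤ, 0 ≤ s → s < len D n → Wd D (K + 1) (r + s) = ch * Wd D n s := by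
  rcases D.ccover K f with ⟨j, hj0, hjm, hjf⟩
  have hKpos := len_pos D K
  have hnpos := len_pos D n
  have hfc : f⁻¹ * D.c K j ∈ D.N k := by
    have h1 : (D.c K j)⁻¹ * f ∈ D.N k := Nle D hk hjf
    have h2 := (D.N k).inv_mem h1
    rwa [mul_inv_rev, inv_inv] at h2
  refine ⟨j * len D K, D.c K j, by positivity, ?_, hfc, ?_⟩
  · have h1 : len D n ≤ len D K := len_mono D hn
    have h2 : (j + 1) * len D K ≤ D.m K * len D K := by
      have : j + 1 ≤ D.m K := hjm
      exact mul_le_mul_of_nonneg_right this (le_of_lt hKpos)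
    show j * len D K + len D n ≤ len D (K + 1)
    show j * len D K + len D n ≤ D.m K * len D K
    nlinarith
  · intro s hs0 hs1
    have hsK : s < len D K := lt_of_lt_of_le hs1 (len_mono D hn)
    show D.c K ((j * len D K + s) / len D K) *
        Wd D K ((j * len D K + s) % len D K) = D.c K j * Wd D n s
    have hediv : (j * len D K + s) / len D K = j := by
      rw [add_comm, Int.add_mul_ediv_right _ _ (ne_of_gt hKpos)]
      rw [Int.ediv_eq_zero_of_lt hs0 hsK, zero_add]
    have hemod : (j * len D K + s) % len D K = s := by
      rw [add_comm, Int.add_mul_emod_self_right]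
      exact Int.emod_eq_of_lt hs0 hsK
    rw [hediv, hemod, Wd_prefix D hn hs0 hs1]

/-- The local matching condition at scale `N k` on a window of radius `L`. -/
def Good (k L : ℕ) (y : ℤ → G) : Prop :=
  ∃ (n : ℕ) (q : ℤ) (h : G), (L : ℤ) ≤ q ∧ q + L < len D n ∧
    ∀ i : ℤ, -(L : ℤ) ≤ i → i ≤ (L : ℤ) → (h * Wd D n (q + i))⁻¹ * y i ∈ D.N k

/-- The subshift: sequences all of whose windows match translated blocks at all scales. -/
def XS : Set (ℤ → G) := { y | ∀ k L : ℕ, Good D k L y }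

theorem good_mono {k k' L L' : ℕ} (hk : k ≤ k') (hL : L ≤ L') {y : ℤ → G}
    (h : Good D k' L' y) : Good D k L y := by
  rcases h with ⟨n, q, hh, h1, h2, h3⟩
  refine ⟨n, q, hh, ?_, ?_, fun i hi1 hi2 => ?_⟩
  · exact le_trans (by exact_mod_cast hL) h1
  · have : (L : ℤ) ≤ (L' : ℤ) := by exact_mod_cast hL
    linarith
  · exact Nle D hk (h3 i (by push_cast at hi1 ⊢; omega) (by push_cast at hi2 ⊢; omega))

/-- `Good k L` only depends on the window `[-L, L]` modulo `N k`. -/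
theorem good_congr {k L : ℕ} {y y' : ℤ → G}
    (hcong : ∀ i : ℤ, -(L : ℤ) ≤ i → i ≤ (L : ℤ) → (y i)⁻¹ * y' i ∈ D.N k)
    (h : Good D k L y) : Good D k L y' := by
  rcases h with ⟨n, q, hh, h1, h2, h3⟩
  refine ⟨n, q, hh, h1, h2, fun i hi1 hi2 => ?_⟩
  have ha := h3 i hi1 hi2
  have hb := hcong i hi1 hi2
  have : (hh * Wd D n (q + i))⁻¹ * y' i =
      ((hh * Wd D n (q + i))⁻¹ * y i) * ((y i)⁻¹ * y' i) := by group
  rw [this]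
  exact (D.N k).mul_mem ha hb

theorem isClosed_good (k L : ℕ) : IsClosed { y : ℤ → G | Good D k L y } := by
  rw [← isOpen_compl_iff]
  rw [isOpen_iff_mem_nhds]
  intro y hy
  have hopen : ∀ i : ℤ, IsOpen { x : ℤ → G | (y i)⁻¹ * x i ∈ D.N k } := by
    intro i
    have : Continuous fun x : ℤ → G => (y i)⁻¹ * x i :=
      continuous_const.mul (continuous_apply i)
    exact (D.Nopen k).preimage this
  have hmem : ∀ i : ℤ, y ∈ { x : ℤ → G | (y i)⁻¹ * x i ∈ D.N k } := by
    intro i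
    simp only [Set.mem_setOf_eq, inv_mul_cancel]
    exact (D.N k).one_mem
  have : (⋂ i ∈ Finset.Icc (-(L:ℤ)) L, { x : ℤ → G | (y i)⁻¹ * x i ∈ D.N k }) ∈ nhds y := by
    rw [Filter.biInter_finset_mem]
    intro i _
    exact (hopen i).mem_nhds (hmem i)
  refine Filter.mem_of_superset this ?_
  intro y' hy'
  simp only [Set.mem_iInter] at hy'
  intro hgood
  apply hy
  refine good_congr D (fun i hi1 hi2 => ?_) hgood
  have := hy' i (Finset.mem_Icc.2 ⟨hi1, hi2⟩)
  have h2 := (D.N k).inv_mem this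
  rwa [mul_inv_rev, inv_inv] at h2

theorem isClosed_XS : IsClosed (XS D) := by
  have : XS D = ⋂ p : ℕ × ℕ, { y : ℤ → G | Good D p.1 p.2 y } := by
    ext y
    constructor
    · intro hy
      exact Set.mem_iInter.2 fun p => hy p.1 p.2
    · intro hy k L
      exact Set.mem_iInter.1 hy (k, L)
  rw [this]
  exact isClosed_iInter fun p => isClosed_good D p.1 p.2

theorem nonempty_XS : (XS D).Nonempty := by
  have hS : ∀ j : ℕ, { y : ℤ → G | Good D j j y }.Nonempty := by
    intro j
    set n := 2 * j + 1 with hn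
    refine ⟨fun i => Wd D n ((j : ℤ) + i), n, (j : ℤ), 1, le_rfl, ?_, fun i hi1 hi2 => ?_⟩
    · have := len_big D n
      push_cast [hn] at this ⊢
      linarith
    · simp only [one_mul, inv_mul_cancel]
      exact (D.N j).one_mem
  have hanti : ∀ j : ℕ, { y : ℤ → G | Good D (j+1) (j+1) y } ⊆ { y : ℤ → G | Good D j j y } :=
    fun j y hy => good_mono D (Nat.le_succ j) (Nat.le_succ j) hy
  have hne := IsCompact.nonempty_iInter_of_sequence_nonempty_isCompact_isClosed
      (fun j => { y : ℤ → G | Good D j j y }) hanti hS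
      ((isClosed_good D 0 0).isCompact) (fun j => isClosed_good D j j)
  rcases hne with ⟨y, hy⟩
  simp only [Set.mem_iInter] at hy
  refine ⟨y, fun k L => good_mono D (le_max_left k L) (le_max_right k L) (hy (max k L))⟩

theorem shift_mem_XS {y : ℤ → G} (hy : y ∈ XS D) : (fun i => y (i + 1)) ∈ XS D := by
  intro k L
  rcases hy k (L + 1) with ⟨n, q, hh, h1, h2, h3⟩
  refine ⟨n, q + 1, hh, by push_cast at h1 ⊢; linarith, by push_cast at h2 ⊢; linarith,
    fun i hi1 hi2 => ?_⟩
  have := h3 (i + 1) (by push_cast at hi1 ⊢; linarith) (by push_cast at hi2 ⊢; linarith)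
  rwa [show q + 1 + i = q + (i + 1) by ring]

theorem shift_inv_mem_XS {y : ℤ → G} (hy : y ∈ XS D) : (fun i => y (i - 1)) ∈ XS D := by
  intro k L
  rcases hy k (L + 1) with ⟨n, q, hh, h1, h2, h3⟩
  refine ⟨n, q - 1, hh, by push_cast at h1 ⊢; linarith, by push_cast at h2 ⊢; linarith,
    fun i hi1 hi2 => ?_⟩
  have := h3 (i - 1) (by push_cast at hi1 ⊢; linarith) (by push_cast at hi2 ⊢; linarith)
  rwa [show q - 1 + i = q + (i - 1) by ring]

theorem mul_mem_XS (g : G) {y : ℤ → G} (hy : y ∈ XS D) : (fun i => g * y i) ∈ XS D := by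
  intro k L
  rcases hy k L with ⟨n, q, hh, h1, h2, h3⟩
  refine ⟨n, q, g * hh, h1, h2, fun i hi1 hi2 => ?_⟩
  have := h3 i hi1 hi2
  have heq : (g * hh * Wd D n (q + i))⁻¹ * (g * y i) =
      (hh * Wd D n (q + i))⁻¹ * y i := by group
  rwa [heq]

/-- The key minimality estimate. -/
theorem key_density {x z : ℤ → G} (hx : x ∈ XS D) (hz : z ∈ XS D) (k L : ℕ) :
    ∃ a : ℤ, ∀ i : ℤ, -(L : ℤ) ≤ i → i ≤ (L : ℤ) → (z i)⁻¹ * x (a + i) ∈ D.N k := by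
  classical
  rcases hz k L with ⟨n, q, h, hq1, hq2, hzi⟩
  set K := max k n with hK
  set l1 : ℤ := len D (K + 1) with hl1
  have hl1pos : 0 < l1 := len_pos D (K + 1)
  set L' : ℕ := l1.toNat with hL'
  have hL'eq : (L' : ℤ) = l1 := Int.toNat_of_nonneg (le_of_lt hl1pos)
  rcases hx k L' with ⟨m', q', h', hq'1, hq'2, hxi⟩
  rw [hL'eq] at hq'1 hq'2
  -- m' is at least K + 2
  have hm' : K + 1 ≤ m' := by
    by_contra hcon
    push_neg at hcon
    have h1 : len D m' ≤ len D (K + 1) := len_mono D (le_trans (Nat.le_of_lt_succ hcon) (Nat.le_succ K))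
    linarith
  -- the aligned block
  set t : ℤ := (q' - l1) / l1 + 1 with ht
  have htmul : t * l1 ≤ q' ∧ q' - l1 < t * l1 := by
    have hdm := Int.mul_ediv_add_emod (q' - l1) l1
    have hr0 : 0 ≤ (q' - l1) % l1 := Int.emod_nonneg _ (ne_of_gt hl1pos)
    have hr1 : (q' - l1) % l1 < l1 := Int.emod_lt_of_pos _ hl1pos
    constructor
    · nlinarith
    · nlinarith
  have ht0 : 0 ≤ t := by
    have h0 : 0 ≤ (q' - l1) / l1 := Int.ediv_nonneg (by linarith) (le_of_lt hl1pos)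
    linarith
  have htb : (t + 1) * l1 ≤ len D m' := by
    have : t * l1 + l1 ≤ q' + l1 := by linarith [htmul.1]
    nlinarith [htmul.1]
  rcases exists_block D (K + 1) m' hm' t ht0 htb with ⟨c', hblock⟩
  rcases exists_occurrence D (le_max_left k n) (le_max_right k n) ((h' * c')⁻¹ * h)
    with ⟨r, ch, hr0, hrlen, hfc, hocc⟩
  refine ⟨t * l1 + r + q - q', fun i hi1 hi2 => ?_⟩
  set s : ℤ := q + i with hs
  have hs0 : 0 ≤ s := by linarith
  have hs1 : s < len D n := by linarith
  have hrs0 : 0 ≤ r + s := by linarith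
  have hrs1 : r + s < l1 := by linarith [len_pos D n]
  -- position bounds
  have hpos1 : -(L' : ℤ) ≤ t * l1 + r + q - q' + i := by
    rw [hL'eq]
    linarith [htmul.2]
  have hpos2 : t * l1 + r + q - q' + i ≤ (L' : ℤ) := by
    rw [hL'eq]
    linarith [htmul.1]
  have hx1 := hxi _ hpos1 hpos2
  have hword : Wd D m' (q' + (t * l1 + r + q - q' + i)) = c' * (ch * Wd D n s) := by
    have h1 : q' + (t * l1 + r + q - q' + i) = t * l1 + (r + s) := by ring
    rw [h1, hblock (r + s) hrs0 hrs1, hocc s hs0 hs1]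
  rw [hword] at hx1
  have hz1 := hzi i hi1 hi2
  -- assemble
  have hnu : h⁻¹ * (h' * c') * ch ∈ D.N k := by
    have heq : h⁻¹ * (h' * c') * ch = ((h' * c')⁻¹ * h)⁻¹ * ch := by group
    rw [heq]; exact hfc
  set w := Wd D n s with hw
  have hgoal : (z i)⁻¹ * x (t * l1 + r + q - q' + i) =
      ((h * w)⁻¹ * z i)⁻¹ * (w⁻¹ * (h⁻¹ * (h' * c') * ch) * w) *
        ((h' * (c' * (ch * w)))⁻¹ * x (t * l1 + r + q - q' + i)) := by
    group
  have hmem : (z i)⁻¹ * x (t * l1 + r + q - q' + i) ∈ D.N k := by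
    rw [hgoal]
    refine (D.N k).mul_mem ((D.N k).mul_mem ((D.N k).inv_mem hz1) ?_) hx1
    have := (D.Nnormal k).conj_mem _ hnu w⁻¹
    rwa [inv_inv] at this
  rwa [show t * l1 + r + q - q' + i = t * l1 + r + q - q' + i from rfl] at hmem

/-- The underlying space of the system: the subshift `XS D` as a subtype. -/
abbrev Xt : Type := {y : ℤ → G // y ∈ XS D}

theorem compactSpace_Xt : CompactSpace (Xt D) :=
  isCompact_iff_compactSpace.1 ((isClosed_XS D).isCompact)

theorem nonempty_Xt : Nonempty (Xt D) := by
  rcases nonempty_XS D with ⟨y, hy⟩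
  exact ⟨⟨y, hy⟩⟩

/-- The shift homeomorphism. -/
def shiftX : Xt D ≃ₜ Xt D where
  toFun y := ⟨fun i => y.1 (i + 1), shift_mem_XS D y.2⟩
  invFun y := ⟨fun i => y.1 (i - 1), shift_inv_mem_XS D y.2⟩
  left_inv y := Subtype.ext (funext fun i => by simp)
  right_inv y := Subtype.ext (funext fun i => by simp)
  continuous_toFun := by
    apply Continuous.subtype_mk
    exact continuous_pi fun i => (continuous_apply (i + 1)).comp continuous_subtype_val
  continuous_invFun := by
    apply Continuous.subtype_mk
    exact continuous_pi fun i => (continuous_apply (i - 1)).comp continuous_subtype_val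

/-- The left-translation homeomorphisms. -/
def mulX (g : G) : Xt D ≃ₜ Xt D where
  toFun y := ⟨fun i => g * y.1 i, mul_mem_XS D g y.2⟩
  invFun y := ⟨fun i => g⁻¹ * y.1 i, mul_mem_XS D g⁻¹ y.2⟩
  left_inv y := Subtype.ext (funext fun i => by simp)
  right_inv y := Subtype.ext (funext fun i => by simp)
  continuous_toFun := by
    apply Continuous.subtype_mk
    exact continuous_pi fun i =>
      continuous_const.mul ((continuous_apply i).comp continuous_subtype_val)
  continuous_invFun := by
    apply Continuous.subtype_mk
    exact continuous_pi fun i =>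
      continuous_const.mul ((continuous_apply i).comp continuous_subtype_val)

/-- The embedding of `G` into the homeomorphism group. -/
def rho : G →* (Xt D ≃ₜ Xt D) where
  toFun := mulX D
  map_one' := Homeomorph.ext fun y => Subtype.ext (funext fun i => one_mul _)
  map_mul' g h := Homeomorph.ext fun y => Subtype.ext (funext fun i => mul_assoc g h (y.1 i))

theorem rho_injective : Function.Injective (rho D) := by
  rw [injective_iff_map_eq_one]
  intro g hg
  rcases nonempty_XS D with ⟨y, hy⟩
  have h1 : (rho D g ⟨y, hy⟩ : Xt D).1 0 = ((1 : Xt D ≃ₜ Xt D) ⟨y, hy⟩ : Xt D).1 0 := by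
    rw [hg]
  have h2 : g * y 0 = y 0 := h1
  have h3 : g * y 0 = 1 * y 0 := by rw [h2, one_mul]
  exact mul_right_cancel h3

theorem rho_commutes (g : G) (x : Xt D) : rho D g (shiftX D x) = shiftX D (rho D g x) :=
  Subtype.ext (funext fun _ => rfl)

theorem shiftX_zpow (a : ℤ) : ∀ (y : Xt D) (i : ℤ), ((shiftX D ^ a) y).1 i = y.1 (i + a) := by
  induction a using Int.induction_on with
  | zero => intro y i; rw [zpow_zero]; show y.1 i = y.1 (i + 0); rw [add_zero]
  | succ n ih =>
    intro y i
    have h1 : shiftX D ^ ((n : ℤ) + 1) = shiftX D ^ (n : ℤ) * shiftX D := zpow_add_one _ _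
    have h2 : ((shiftX D ^ (n : ℤ) * shiftX D) y) = (shiftX D ^ (n : ℤ)) (shiftX D y) := rfl
    rw [h1, h2, ih (shiftX D y) i]
    show y.1 (i + n + 1) = y.1 (i + (n + 1))
    ring_nf
  | pred n ih =>
    intro y i
    have h1 : shiftX D ^ (-(n : ℤ) - 1) = shiftX D ^ (-(n : ℤ)) * (shiftX D)⁻¹ :=
      zpow_sub_one _ _
    have h2 : ((shiftX D ^ (-(n : ℤ)) * (shiftX D)⁻¹) y) =
        (shiftX D ^ (-(n : ℤ))) ((shiftX D)⁻¹ y) := rfl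
    have h3 : ((shiftX D)⁻¹ y).1 = fun i => y.1 (i - 1) := rfl
    rw [h1, h2, ih ((shiftX D)⁻¹ y) i, h3]
    show y.1 (i + -(n : ℤ) - 1) = y.1 (i + (-(n : ℤ) - 1))
    ring_nf

theorem dense_orbit (x : Xt D) :
    Dense (Set.range fun a : ℤ => (shiftX D ^ a) x) := by
  classical
  rw [dense_iff_inter_open]
  rintro U hU ⟨z, hzU⟩
  rcases isOpen_induced_iff.1 hU with ⟨V, hVopen, hVU⟩
  have hzV : (z : ℤ → G) ∈ V := by rw [← hVU] at hzU; exact hzU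
  rcases isOpen_pi_iff.1 hVopen z.1 hzV with ⟨I, u, hu, hsub⟩
  have hex : ∀ i : ℤ, ∃ k : ℕ, i ∈ I → (D.N k : Set G) ⊆ (fun g => z.1 i * g) ⁻¹' u i := by
    intro i
    by_cases hi : i ∈ I
    · have hnb : (fun g => z.1 i * g) ⁻¹' u i ∈ nhds (1 : G) := by
        have hc : Continuous fun g : G => z.1 i * g := continuous_const.mul continuous_id
        have hmem : z.1 i * 1 ∈ u i := by rw [mul_one]; exact (hu i hi).2
        exact hc.continuousAt.preimage_mem_nhds ((hu i hi).1.mem_nhds hmem)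
      rcases D.Nbasis _ hnb with ⟨k, hk⟩
      exact ⟨k, fun _ => hk⟩
    · exact ⟨0, fun h => absurd h hi⟩
  choose ki hki using hex
  set k : ℕ := I.sup ki with hkdef
  set L : ℕ := I.sup Int.natAbs with hLdef
  rcases key_density D x.2 z.2 k L with ⟨a, ha⟩
  refine ⟨(shiftX D ^ a) x, ?_, Set.mem_range_self a⟩
  rw [← hVU]
  show ((shiftX D ^ a) x : ℤ → G) ∈ V
  apply hsub
  intro i hi
  have hiL : i.natAbs ≤ L := Finset.le_sup hi
  have hik : ki i ≤ k := Finset.le_sup hi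
  have h1 : -(L : ℤ) ≤ i ∧ i ≤ (L : ℤ) := by omega
  have h2 := ha i h1.1 h1.2
  have h3 : (z.1 i)⁻¹ * x.1 (a + i) ∈ D.N (ki i) := Nle D hik h2
  have h4 := hki i hi h3
  simp only [Set.mem_preimage] at h4
  have h5 : z.1 i * ((z.1 i)⁻¹ * x.1 (a + i)) = x.1 (a + i) := by group
  rw [h5] at h4
  have h6 : ((shiftX D ^ a) x).1 i = x.1 (a + i) := by
    rw [shiftX_zpow D a x i, add_comm]
  show ((shiftX D ^ a) x).1 i ∈ u i
  rw [h6]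
  exact h4

theorem perfect_Xt [PerfectSpace G] : PerfectSpace (Xt D) := by
  rw [perfectSpace_iff_forall_not_isolated]
  intro x
  set φ : G → Xt D := fun g => ⟨fun i => g * x.1 i, mul_mem_XS D g x.2⟩ with hφ
  have hcont : Continuous φ := by
    apply Continuous.subtype_mk
    exact continuous_pi fun i => (continuous_mul_right (x.1 i)).comp continuous_id
  have hφ1 : φ 1 = x := Subtype.ext (funext fun i => one_mul _)
  have htend : Filter.Tendsto φ (nhdsWithin (1 : G) {(1 : G)}ᶜ) (nhdsWithin x {x}ᶜ) := by
    apply Filter.Tendsto.inf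
    · rw [← hφ1]
      exact hcont.tendsto 1
    · rw [Filter.tendsto_principal_principal]
      intro g hg
      simp only [Set.mem_compl_iff, Set.mem_singleton_iff] at hg ⊢
      intro hcon
      apply hg
      have : (φ g).1 0 = x.1 0 := by rw [hcon]
      have h2 : g * x.1 0 = 1 * x.1 0 := by
        show (φ g).1 0 = 1 * x.1 0
        rw [this, one_mul]
      exact mul_right_cancel h2
  have : Filter.NeBot (nhdsWithin (1 : G) {(1 : G)}ᶜ) := PerfectSpace.not_isolated 1
  exact htend.neBot

end CantorEmbedAux

/-- Let `𝐆` be a topological group whose underlying space is a Cantor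
set. Then there is a minimal Cantor `ℤ`-system `(X,S,ℤ)` such that `𝐆` is isomorphic, as an
abstract group, to a subgroup of `Aut(S,ℤ)`: there is an injective group homomorphism from
`𝐆` into the homeomorphism group of `X` whose image commutes with `S`. -/
theorem cantor_topological_group_embeds_in_Z_centralizer
    (G : Type) [Group G] [TopologicalSpace G] [IsTopologicalGroup G]
    [CompactSpace G] [MetrizableSpace G] [TotallyDisconnectedSpace G]
    [PerfectSpace G] [Nonempty G] :
    ∃ C : CantorZSys,
      (∀ x : C.X, Dense (Set.range fun n : ℤ => (C.S ^ n) x)) ∧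
      ∃ ρ : G →* (C.X ≃ₜ C.X), Function.Injective ρ ∧
        ∀ (g : G) (x : C.X), ρ g (C.S x) = C.S (ρ g x) := by
  classical
  obtain ⟨D⟩ := CantorEmbedAux.exists_datum (G := G)
  haveI : CompactSpace (CantorEmbedAux.Xt D) := CantorEmbedAux.compactSpace_Xt D
  haveI : PerfectSpace (CantorEmbedAux.Xt D) := CantorEmbedAux.perfect_Xt D
  haveI : Nonempty (CantorEmbedAux.Xt D) := CantorEmbedAux.nonempty_Xt D
  refine ⟨{ X := CantorEmbedAux.Xt D, S := CantorEmbedAux.shiftX D }, ?_, ?_⟩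
  · intro x
    exact CantorEmbedAux.dense_orbit D x
  · exact ⟨CantorEmbedAux.rho D, CantorEmbedAux.rho_injective D,
      fun g x => CantorEmbedAux.rho_commutes D g x⟩
end

section
/- Let Γ be a countable residually finite group. Then there exists a minimal Cantor ℤ-system (X,S,ℤ) such that Γ is isomorphic to a subgroup of Aut(S,ℤ). -/
open TopologicalSpace

section RFAux

variable {Γ : Type} [Group Γ]

structure SepData (Γ : Type) [Group Γ] where
  Q : ℕ → Type
  grp : ∀ m, Group (Q m)
  fin : ∀ m, Finite (Q m)
  pi : ∀ m, Γ →* Q m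
  sep : ∀ γ : Γ, γ ≠ 1 → ∃ m, pi m γ ≠ 1
  om : Q 0
  om_ne : om ≠ 1
  sq : ∀ a : Q 0, a * a = 1
  card2 : ∀ a b c : Q 0, a = b ∨ b = c ∨ a = c

attribute [instance] SepData.grp SepData.fin

variable (D : SepData Γ)

/-- Targets: a finite window of prescribed symbols. -/
abbrev TargT := (M : ℕ) × (∀ m : Fin (M + 1), D.Q m)

instance : Countable (TargT D) := by
  have : ∀ M : ℕ, Countable (∀ m : Fin (M + 1), D.Q m) := fun M => Finite.to_countable
  infer_instance

instance : Nonempty (TargT D) := ⟨⟨0, fun _ => 1⟩⟩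

noncomputable def cfun : ℕ → TargT D := (exists_surjective_nat (TargT D)).choose

lemma cfun_surj : Function.Surjective (cfun D) := (exists_surjective_nat (TargT D)).choose_spec

noncomputable def extT (t : TargT D) : ∀ m, D.Q m :=
  fun m => if h : m < t.1 + 1 then t.2 ⟨m, h⟩ else 1

noncomputable def Sfun (i : ℕ) : ∀ m, D.Q m := extT D (cfun D (padicValNat 2 i))

lemma v2_window (k a : ℕ) :
    ∃ i, a ≤ i ∧ i ≤ a + 2 ^ (k + 1) ∧ padicValNat 2 i = k := by
  set d := 2 ^ (k + 1) with hd
  set q := (a + 2 ^ k) / d with hq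
  have h1 : d * q ≤ a + 2 ^ k := by rw [hq, mul_comm]; exact Nat.div_mul_le_self _ _
  have h2 : a + 2 ^ k < d * q + d := by
    have hdm : d * q + (a + 2 ^ k) % d = a + 2 ^ k := by rw [hq]; exact Nat.div_add_mod _ _
    have : (a + 2 ^ k) % d < d := Nat.mod_lt _ (by positivity)
    omega
  have hd2 : d = 2 * 2 ^ k := by rw [hd, pow_succ, mul_comm]
  refine ⟨2 ^ k + d * q, by omega, by omega, ?_⟩
  have heq : (2:ℕ) ^ k + d * q = 2 ^ k * (1 + 2 * q) := by
    rw [hd, pow_succ]; ring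
  rw [heq]
  haveI : Fact (Nat.Prime 2) := ⟨Nat.prime_two⟩
  rw [padicValNat.mul (by positivity) (by omega), padicValNat.prime_pow,
    padicValNat.eq_zero_of_not_dvd (by omega)]
  omega

lemma Sfun_window (M : ℕ) : ∃ P : ℕ, ∀ (τ : ∀ m, D.Q m) (a : ℕ),
    ∃ i, a ≤ i ∧ i ≤ a + P ∧ ∀ m, m ≤ M → Sfun D i m = τ m := by
  have hfin : (Set.range fun τ : ∀ m : Fin (M + 1), D.Q m =>
      (cfun_surj D ⟨M, τ⟩).choose).Finite := Set.finite_range _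
  obtain ⟨K, hK⟩ := hfin.bddAbove
  refine ⟨2 ^ (K + 1), fun τ a => ?_⟩
  set τ' : ∀ m : Fin (M + 1), D.Q m := fun m => τ m with hτ'
  set k := (cfun_surj D ⟨M, τ'⟩).choose with hk
  have hck : cfun D k = ⟨M, τ'⟩ := (cfun_surj D ⟨M, τ'⟩).choose_spec
  have hkK : k ≤ K := hK (Set.mem_range_self τ')
  obtain ⟨i, hi1, hi2, hi3⟩ := v2_window k a
  have hP : (2:ℕ) ^ (k+1) ≤ 2 ^ (K+1) := Nat.pow_le_pow_right (by norm_num) (by omega)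
  refine ⟨i, hi1, by omega, fun m hm => ?_⟩
  rw [Sfun, hi3, hck]
  exact dif_pos (Nat.lt_succ_of_le hm)
/-- symbol at level `k` for a balanced-ternary digit `e ∈ {-1,0,1}`. -/
noncomputable def sd : ∀ m : ℕ, ℕ → ℤ → D.Q m
  | 0 => fun k e => if e = 1 then Sfun D k 0 else if e = -1 then Sfun D k 0 * D.om else 1
  | m + 1 => fun k e => if e = 1 then Sfun D k (m + 1) else 1

noncomputable def sfull (k : ℕ) (e : ℤ) : ∀ m, D.Q m := fun m => sd D m k e

lemma sfull_zero (k : ℕ) : sfull D k 0 = 1 := by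
  funext m; cases m <;> simp [sfull, sd]

lemma sfull_one (k : ℕ) : sfull D k 1 = Sfun D k := by
  funext m; cases m <;> simp [sfull, sd]

def bal (j : ℤ) : ℤ := if j % 3 = 2 then -1 else j % 3

def nxt (j : ℤ) : ℤ := (j - bal j) / 3

lemma nxt_eq (j : ℤ) : 3 * nxt j + bal j = j := by
  unfold nxt bal; split <;> omega

lemma bal_mem (j : ℤ) : bal j = -1 ∨ bal j = 0 ∨ bal j = 1 := by
  unfold bal; split <;> omega

lemma natAbs_nxt_lt {j : ℤ} (h : j ≠ 0) : (nxt j).natAbs < j.natAbs := by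
  unfold nxt bal; split <;> omega

lemma bal_zero : bal 0 = 0 := rfl
lemma nxt_zero : nxt 0 = 0 := rfl

lemma bal_add (j c : ℤ) : bal (j + 3 * c) = bal j := by
  unfold bal; split <;> split <;> omega

lemma nxt_add (j c : ℤ) : nxt (j + 3 * c) = nxt j + c := by
  unfold nxt bal; split <;> split <;> omega

noncomputable def gee (j : ℤ) (k : ℕ) : ∀ m, D.Q m :=
  if h : j = 0 then 1 else gee (nxt j) (k + 1) * sfull D k (bal j)
  termination_by j.natAbs
  decreasing_by exact natAbs_nxt_lt h

lemma gee_zero (k : ℕ) : gee D 0 k = 1 := by rw [gee]; simp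

lemma gee_rec (j : ℤ) (k : ℕ) : gee D j k = gee D (nxt j) (k + 1) * sfull D k (bal j) := by
  by_cases h : j = 0
  · subst h; rw [gee_zero, bal_zero, nxt_zero, gee_zero, sfull_zero, one_mul]
  · rw [gee]; simp [h]

lemma gee_one (l : ℕ) : gee D 1 l = Sfun D l := by
  rw [gee_rec]
  have h1 : bal 1 = 1 := rfl
  have h2 : nxt 1 = 0 := rfl
  rw [h1, h2, gee_zero, sfull_one, one_mul]

lemma gee_negone (l : ℕ) : gee D (-1) l = sfull D l (-1) := by
  rw [gee_rec]
  have h1 : bal (-1) = -1 := rfl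
  have h2 : nxt (-1) = 0 := rfl
  rw [h1, h2, gee_zero, one_mul]

lemma gee_shift : ∀ (k l : ℕ) (t j : ℤ), 2 * j.natAbs < 3 ^ k →
    gee D (j + 3 ^ k * t) l = gee D t (l + k) * gee D j l := by
  intro k
  induction k with
  | zero =>
    intro l t j hj
    have hj0 : j = 0 := by simp at hj; omega
    subst hj0
    simp [gee_zero]
  | succ k IH =>
    intro l t j hj
    have hpow : (3:ℤ) ^ (k+1) = 3 * 3 ^ k := by rw [pow_succ]; ring
    by_cases h0 : j + 3 ^ (k+1) * t = 0
    · have hjeq : j = -((3:ℤ) ^ (k+1) * t) := by omega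
      have hnat : j.natAbs = 3 ^ (k+1) * t.natAbs := by
        rw [hjeq, Int.natAbs_neg, Int.natAbs_mul]
        congr 1
      have ht0 : t = 0 := by
        rcases Nat.eq_zero_or_pos t.natAbs with h | h
        · omega
        · exfalso
          have : (3:ℕ) ^ (k+1) ≤ 3 ^ (k+1) * t.natAbs := Nat.le_mul_of_pos_right _ h
          omega
      have hj0 : j = 0 := by rw [hjeq, ht0]; ring
      subst ht0; subst hj0
      simp [gee_zero]
    · rw [gee_rec D (j + 3 ^ (k+1) * t)]
      have hrw : j + 3 ^ (k+1) * t = j + 3 * (3 ^ k * t) := by rw [hpow]; ring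
      rw [hrw, bal_add, nxt_add]
      have hnxt : 2 * (nxt j).natAbs < 3 ^ k := by
        have he := nxt_eq j
        have hodd : (3:ℕ) ^ k % 2 = 1 := by simp [Nat.pow_mod]
        have hp : (3:ℕ) ^ (k+1) = 3 * 3 ^ k := by rw [pow_succ]; ring
        rcases bal_mem j with hb | hb | hb <;> rw [hb] at he <;> omega
      have hidx : l + 1 + k = l + (k + 1) := by omega
      have hlast : gee D (nxt j) (l+1) * sfull D l (bal j) = gee D j l := (gee_rec D j l).symm
      rw [IH (l+1) t (nxt j) hnxt, hidx, mul_assoc, hlast]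

lemma gee_pow3 (i l : ℕ) : gee D ((3:ℤ) ^ i) l = Sfun D (l + i) := by
  have h := gee_shift D i l 1 0 (by positivity)
  simpa [gee_zero, gee_one] using h

lemma natAbs_pow3 (i : ℕ) : ((3:ℤ) ^ i).natAbs = 3 ^ i := by
  simp [Int.natAbs_pow]

/-- The master combinatorial lemma: within any window of bounded length there is a
shift `n` which multiplies the pattern (on a given finite window) by `τ` on the left. -/
lemma twisted_window (τ : ∀ m, D.Q m) (M N : ℕ) :
    ∃ L : ℕ, 0 < L ∧ ∀ b : ℤ, ∃ n : ℤ, b ≤ n ∧ n ≤ b + L ∧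
      ∀ m, m ≤ M → ∀ j : ℤ, j.natAbs ≤ N →
        gee D (j + n) 0 m = τ m * gee D j 0 m := by
  obtain ⟨P, hP⟩ := Sfun_window D M
  set k := 2 * N + 1 with hkdef
  have hk3 : 2 * N < 3 ^ k := by
    calc 2 * N < 2 * N + 1 := Nat.lt_succ_self _
    _ ≤ 3 ^ k := Nat.le_of_lt (Nat.lt_pow_self (by norm_num))
  set w := P + 1 with hwdef
  refine ⟨2 * 3 ^ (k + w), by positivity, fun b => ?_⟩
  set d : ℤ := 3 ^ (k + w) with hddef
  have hd : (0:ℤ) < d := by positivity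
  set q := b / d with hqdef
  set r := b % d with hrdef
  have hqr : d * q + r = b := Int.mul_ediv_add_emod b d
  have hr0 : 0 ≤ r := Int.emod_nonneg b (ne_of_gt hd)
  have hrd : r < d := Int.emod_lt_of_pos b hd
  set u := q + 1 with hudef
  have e1 : d * u = d * q + d := by rw [hudef]; ring
  obtain ⟨i', hi'1, hi'2, hSv⟩ := hP (fun m => (gee D u (k + w) m)⁻¹ * τ m) k
  obtain ⟨i, rfl, hiP⟩ : ∃ i : ℕ, i' = k + i ∧ i ≤ P := ⟨i' - k, by omega, by omega⟩
  refine ⟨d * u + 3 ^ (k + i), ?_, ?_, ?_⟩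
  · have : (0:ℤ) < 3 ^ (k + i) := by positivity
    omega
  · have h3 : (3:ℤ) ^ (k + i) ≤ d := by
      rw [hddef]
      exact pow_le_pow_right₀ (by norm_num) (by omega)
    push_cast
    omega
  · intro m hm j hj
    have ht : j + (d * u + 3 ^ (k + i)) = j + 3 ^ k * ((3:ℤ) ^ i + 3 ^ w * u) := by
      rw [hddef, pow_add, pow_add]; ring
    rw [ht]
    have h1 : gee D (j + 3 ^ k * ((3:ℤ) ^ i + 3 ^ w * u)) 0
        = gee D ((3:ℤ) ^ i + 3 ^ w * u) k * gee D j 0 := by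
      have := gee_shift D k 0 ((3:ℤ) ^ i + 3 ^ w * u) j (by omega)
      simpa using this
    have h2 : gee D ((3:ℤ) ^ i + 3 ^ w * u) k = gee D u (k + w) * Sfun D (k + i) := by
      have h2' := gee_shift D w k u ((3:ℤ) ^ i) (by
        rw [natAbs_pow3]
        have : 2 * 3 ^ i < 3 ^ w := by
          calc 2 * 3 ^ i ≤ 2 * 3 ^ P := by
                have := Nat.pow_le_pow_right (by norm_num : 1 ≤ 3) hiP
                omega
          _ < 3 * 3 ^ P := by
                have : (0:ℕ) < 3 ^ P := by positivity
                omega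
          _ = 3 ^ w := by rw [hwdef, pow_succ]; ring
        exact this)
      rw [h2', gee_pow3]
    rw [h1, h2]
    have := hSv m hm
    show (gee D u (k + w) m * Sfun D (k + i) m) * gee D j 0 m = τ m * gee D j 0 m
    rw [this, mul_inv_cancel_left]

/-- Aperiodicity of the constructed point, via coordinate `0`. -/
lemma xpt_aperiodic {n : ℤ} (hn : n ≠ 0)
    (h : ∀ j : ℤ, gee D (j + n) 0 0 = gee D j 0 0) : False := by
  -- extend the period to all multiples
  have hmul : ∀ c : ℤ, ∀ j : ℤ, gee D (j + n * c) 0 0 = gee D j 0 0 := by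
    intro c
    induction c using Int.induction_on with
    | zero => simp
    | succ c IH =>
      intro j
      have e : j + n * (c + 1) = (j + n * c) + n := by ring
      rw [e, h (j + n * c), IH]
    | pred c IH =>
      intro j
      have e : (j + n * (-c - 1)) + n = j + n * (-c) := by ring
      have := h (j + n * (-c - 1))
      rw [e, IH j] at this
      exact this.symm
  have hdvd : ∀ j j' : ℤ, n ∣ (j' - j) → gee D j' 0 0 = gee D j 0 0 := by
    intro j j' ⟨c, hc⟩
    have : j' = j + n * c := by omega
    rw [this]; exact hmul c j
  set p := n.natAbs with hp
  haveI : NeZero p := ⟨by omega⟩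
  -- find a repetition in powers of 3 mod p
  obtain ⟨v, v', hvv, hpow⟩ := Finite.exists_ne_map_eq_of_infinite (fun v : ℕ => (3:ZMod p) ^ v)
  wlog hlt : v < v' generalizing v v'
  · exact this v' v (Ne.symm hvv) hpow.symm (by omega)
  set r := v' - v with hr
  have hr1 : 1 ≤ r := by omega
  have hvr : v + r = v' := by omega
  have hstep : ∀ s : ℕ, (3:ZMod p) ^ (v + s * r) = (3:ZMod p) ^ v := by
    intro s
    induction s with
    | zero => simp
    | succ s IH =>
      have e : v + (s+1) * r = (v + s * r) + r := by ring
      rw [e, pow_add, IH, ← pow_add, hvr, ← hpow]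
  set β : ℕ → D.Q 0 := fun i => Sfun D i 0 with hβ
  -- the main contradiction for a matched pair
  have key : ∀ b' c' : ℕ, c' < b' → β b' = β c' →
      (3:ZMod p) ^ b' = (3:ZMod p) ^ c' → False := by
    intro b' c' hcb hβeq hpweq
    -- divisibility
    have hdvd' : n ∣ ((3:ℤ) ^ b' - 3 ^ c') := by
      have : (((3:ℤ) ^ b' - 3 ^ c' : ℤ) : ZMod p) = 0 := by
        push_cast
        rw [hpweq]; ring
      have := (ZMod.intCast_zmod_eq_zero_iff_dvd _ p).1 this
      exact Int.natAbs_dvd.mp this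
    set a' := b' + 1 with ha'
    set J : ℤ := 3 ^ a' + (3 ^ b' - 3 ^ c') with hJ
    have hper : gee D J 0 0 = gee D ((3:ℤ) ^ a') 0 0 := by
      apply hdvd
      have : J - 3 ^ a' = (3:ℤ) ^ b' - 3 ^ c' := by rw [hJ]; ring
      rw [this]; exact hdvd'
    -- compute both sides
    have hA : gee D ((3:ℤ) ^ a') 0 0 = β a' := by
      rw [gee_pow3]; simp [hβ]
    have hCleB : (3:ℤ) ^ c' ≤ 3 ^ b' := pow_le_pow_right₀ (by norm_num) (by omega)
    have hC1 : (1:ℤ) ≤ 3 ^ c' := one_le_pow₀ (by norm_num)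
    have hgJ : gee D J 0 = gee D 1 a' * (gee D 1 b' * gee D (-1) c') := by
      have e1 : J = ((3:ℤ) ^ b' - 3 ^ c') + 3 ^ a' * 1 := by rw [hJ]; ring
      have hna : (2 : ℕ) * ((3:ℤ) ^ b' - 3 ^ c').natAbs < 3 ^ a' := by
        have hcb' : ((3:ℕ) ^ a') = 3 * 3 ^ b' := by rw [ha', pow_succ]; ring
        have hcastb : ((3:ℕ) ^ b' : ℤ) = (3:ℤ) ^ b' := by push_cast; ring
        omega
      rw [e1, gee_shift D a' 0 1 _ hna]
      have e2 : (3:ℤ) ^ b' - 3 ^ c' = (-(3 ^ c')) + 3 ^ b' * 1 := by ring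
      have hnb : (2 : ℕ) * (-((3:ℤ) ^ c')).natAbs < 3 ^ b' := by
        have hcb' : ((3:ℕ) ^ b') = 3 ^ (b' - c') * 3 ^ c' := by
          rw [← pow_add]; congr 1; omega
        have h3 : (3:ℕ) ≤ 3 ^ (b' - c') := by
          calc (3:ℕ) = 3 ^ 1 := by norm_num
          _ ≤ 3 ^ (b' - c') := Nat.pow_le_pow_right (by norm_num) (by omega)
        have hcastc : ((3:ℕ) ^ c' : ℤ) = (3:ℤ) ^ c' := by push_cast; ring
        have hposc : (0:ℕ) < 3 ^ c' := by positivity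
        have : 3 * 3 ^ c' ≤ (3:ℕ) ^ b' := by
          rw [hcb']
          exact Nat.mul_le_mul_right _ h3
        omega
      rw [e2, gee_shift D b' 0 1 _ hnb]
      have e3 : -((3:ℤ) ^ c') = 0 + 3 ^ c' * (-1) := by ring
      rw [e3, gee_shift D c' 0 (-1) 0 (by positivity), gee_zero, mul_one, zero_add]
      norm_num
    have hB : gee D J 0 0 = β a' * (β b' * (β c' * D.om)) := by
      rw [hgJ]
      show (gee D 1 a' 0) * ((gee D 1 b' 0) * (gee D (-1) c' 0)) = _
      rw [gee_one, gee_one, gee_negone]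
      show β a' * (β b' * (sd D 0 c' (-1))) = _
      norm_num [sd]
      rfl
    rw [hB, hA] at hper
    have h1 : β b' * (β c' * D.om) = 1 := by
      have := mul_eq_left.mp hper
      exact this
    rw [hβeq, ← mul_assoc, D.sq, one_mul] at h1
    exact D.om_ne h1
  -- pigeonhole among three values
  rcases D.card2 (β v) (β (v + 2 * r)) (β (v + 4 * r)) with h1 | h1 | h1
  · exact key (v + 2 * r) v (by omega) h1.symm (by simpa using hstep 2)
  · refine key (v + 4 * r) (v + 2 * r) (by omega) h1.symm ?_
    have h2 := hstep 2
    have h4 := hstep 4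
    norm_num at h2 h4
    rw [h2, h4]
  · exact key (v + 4 * r) v (by omega) h1.symm (by simpa using hstep 4)

/-! ### The space and the shift -/

instance qtop (m : ℕ) : TopologicalSpace (D.Q m) := ⊥
instance (m : ℕ) : DiscreteTopology (D.Q m) := ⟨rfl⟩
instance (m : ℕ) : T3Space (D.Q m) := by
  letI := TopologicalSpace.metrizableSpaceMetric (D.Q m)
  infer_instance

abbrev Om := ∀ pr : ℕ × ℤ, D.Q pr.1

noncomputable def xpt : Om D := fun pr => gee D pr.2 0 pr.1

def shiftN (n : ℤ) (z : Om D) : Om D := fun pr => z (pr.1, pr.2 + n)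

lemma shiftN_zero (z : Om D) : shiftN D 0 z = z := by
  funext pr
  show z (pr.1, pr.2 + 0) = z pr
  rw [add_zero]

lemma shiftN_shiftN (n a : ℤ) (z : Om D) :
    shiftN D n (shiftN D a z) = shiftN D (n + a) z := by
  funext pr
  show z (pr.1, pr.2 + n + a) = z (pr.1, pr.2 + (n + a))
  rw [add_assoc]

lemma continuous_shiftN (n : ℤ) : Continuous (shiftN D n) :=
  continuous_pi fun pr => continuous_apply _

def orbitS : Set (Om D) := Set.range fun n : ℤ => shiftN D n (xpt D)

def XS : Set (Om D) := closure (orbitS D)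

lemma xpt_mem : xpt D ∈ XS D := subset_closure ⟨0, shiftN_zero D _⟩

def agrees (M N : ℕ) (z y : Om D) : Prop :=
  ∀ m, m ≤ M → ∀ j : ℤ, j.natAbs ≤ N → z (m, j) = y (m, j)

lemma agrees_isOpen (M N : ℕ) (y : Om D) : IsOpen {z : Om D | agrees D M N z y} := by
  have heq : {z : Om D | agrees D M N z y} =
      ⋂ pr ∈ (Finset.range (M+1) ×ˢ Finset.Icc (-(N:ℤ)) (N:ℤ)), {z : Om D | z pr = y pr} := by
    ext z
    simp only [Set.mem_setOf_eq, Set.mem_iInter, Finset.mem_product, Finset.mem_range,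
      Finset.mem_Icc]
    constructor
    · rintro h ⟨m, j⟩ ⟨h1, h2⟩
      exact h m (by omega) j (by omega)
    · intro h m hm j hj
      exact h (m, j) ⟨by omega, by omega⟩
  rw [heq]
  refine isOpen_biInter_finset fun pr _ => ?_
  show IsOpen ((fun z : Om D => z pr) ⁻¹' {y pr})
  exact IsOpen.preimage (continuous_apply pr) (isOpen_discrete _)

lemma agrees_self (M N : ℕ) (y : Om D) : agrees D M N y y := fun _ _ _ _ => rfl

lemma window_of_open {U : Set (Om D)} (hU : IsOpen U) {y : Om D} (hy : y ∈ U) :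
    ∃ M N : ℕ, ∀ z, agrees D M N z y → z ∈ U := by
  obtain ⟨I, u, h1, h2⟩ := isOpen_pi_iff.1 hU y hy
  refine ⟨I.sup (fun pr => pr.1), I.sup (fun pr => pr.2.natAbs), fun z hz => h2 ?_⟩
  intro pr hpr
  have e : z (pr.1, pr.2) = y (pr.1, pr.2) :=
    hz pr.1 (Finset.le_sup (f := fun pr : ℕ × ℤ => pr.1) hpr) pr.2
      (Finset.le_sup (f := fun pr : ℕ × ℤ => pr.2.natAbs) hpr)
  have e2 : z pr = y pr := by simpa using e
  rw [e2]
  exact (h1 pr hpr).2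

lemma closure_approx {z : Om D} (hz : z ∈ XS D) (M N : ℕ) :
    ∃ a : ℤ, agrees D M N (shiftN D a (xpt D)) z := by
  have hne := mem_closure_iff.1 hz _ (agrees_isOpen D M N z) (agrees_self D M N z)
  obtain ⟨w, hw1, a, rfl⟩ := hne
  exact ⟨a, hw1⟩

lemma mem_XS_of_approx {y : Om D}
    (h : ∀ M N : ℕ, ∃ n : ℤ, agrees D M N (shiftN D n (xpt D)) y) : y ∈ XS D := by
  rw [XS, mem_closure_iff]
  intro U hU hyU
  obtain ⟨M, N, hW⟩ := window_of_open D hU hyU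
  obtain ⟨n, hn⟩ := h M N
  exact ⟨shiftN D n (xpt D), hW _ hn, ⟨n, rfl⟩⟩

lemma shiftN_mem {z : Om D} (hz : z ∈ XS D) (n : ℤ) : shiftN D n z ∈ XS D := by
  have h1 : shiftN D n '' orbitS D ⊆ orbitS D := by
    rintro _ ⟨_, ⟨a, rfl⟩, rfl⟩
    exact ⟨n + a, (shiftN_shiftN D n a _).symm⟩
  have h2 := image_closure_subset_closure_image (continuous_shiftN D n) (s := orbitS D)
  have h3 : shiftN D n z ∈ closure (shiftN D n '' orbitS D) := h2 ⟨z, hz, rfl⟩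
  exact closure_mono h1 h3

/-- Minimality core: any point of the orbit closure approximates any other after a shift. -/
lemma min_core {y z : Om D} (hy : y ∈ XS D) (hz : z ∈ XS D) (M N : ℕ) :
    ∃ n : ℤ, agrees D M N (shiftN D n y) z := by
  obtain ⟨c, hc⟩ := closure_approx D hz M N
  obtain ⟨L, hL0, hLs⟩ := twisted_window D 1 M (N + c.natAbs)
  obtain ⟨a, ha⟩ := closure_approx D hy M (N + c.natAbs + L)
  obtain ⟨rr, hr1, hr2, hr3⟩ := hLs a
  refine ⟨(rr - a) + c, ?_⟩
  intro m hm j hj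
  show y (m, j + ((rr - a) + c)) = z (m, j)
  have h1 : y (m, j + ((rr - a) + c)) = xpt D (m, (j + ((rr - a) + c)) + a) :=
    (ha m hm (j + ((rr - a) + c)) (by omega)).symm
  have e : (j + ((rr - a) + c)) + a = (j + c) + rr := by ring
  rw [h1, e]
  have h2 := hr3 m hm (j + c) (by omega)
  have h3 : xpt D (m, (j + c) + rr) = xpt D (m, j + c) := by simpa [xpt] using h2
  rw [h3]
  exact hc m hm j hj

/-! ### The Γ-action -/

def acti (γ : Γ) (z : Om D) : Om D := fun pr => D.pi pr.1 γ * z pr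

lemma continuous_acti (γ : Γ) : Continuous (acti D γ) :=
  continuous_pi fun pr =>
    (continuous_of_discreteTopology (f := fun y : D.Q pr.1 => D.pi pr.1 γ * y)).comp
      (continuous_apply pr)

lemma acti_xpt_mem (γ : Γ) : acti D γ (xpt D) ∈ XS D := by
  apply mem_XS_of_approx
  intro M N
  obtain ⟨L, hL0, hLs⟩ := twisted_window D (fun m => D.pi m γ) M N
  obtain ⟨n, _, _, h3⟩ := hLs 0
  refine ⟨n, fun m hm j hj => ?_⟩
  show xpt D (m, j + n) = acti D γ (xpt D) (m, j)
  exact h3 m hm j hj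

lemma acti_shiftN (γ : Γ) (n : ℤ) (z : Om D) :
    acti D γ (shiftN D n z) = shiftN D n (acti D γ z) := rfl

lemma acti_mem {z : Om D} (hz : z ∈ XS D) (γ : Γ) : acti D γ z ∈ XS D := by
  have h1 : acti D γ '' orbitS D ⊆ XS D := by
    rintro _ ⟨_, ⟨a, rfl⟩, rfl⟩
    rw [acti_shiftN]
    exact shiftN_mem D (acti_xpt_mem D γ) a
  have h2 := image_closure_subset_closure_image (continuous_acti D γ) (s := orbitS D)
  have h3 : acti D γ z ∈ closure (acti D γ '' orbitS D) := h2 ⟨z, hz, rfl⟩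
  have h4 : IsClosed (XS D) := isClosed_closure
  exact closure_minimal h1 h4 h3

/-! ### The subtype system -/

lemma xt_compact : CompactSpace {z : Om D // z ∈ XS D} :=
  isCompact_iff_compactSpace.1 (IsClosed.isCompact isClosed_closure)

noncomputable def SH : {z : Om D // z ∈ XS D} ≃ₜ {z : Om D // z ∈ XS D} where
  toFun := fun z => ⟨shiftN D 1 z.val, shiftN_mem D z.prop 1⟩
  invFun := fun z => ⟨shiftN D (-1) z.val, shiftN_mem D z.prop (-1)⟩
  left_inv := fun z => Subtype.ext (by
    show shiftN D (-1) (shiftN D 1 z.val) = z.val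
    rw [shiftN_shiftN]; norm_num [shiftN_zero])
  right_inv := fun z => Subtype.ext (by
    show shiftN D 1 (shiftN D (-1) z.val) = z.val
    rw [shiftN_shiftN]; norm_num [shiftN_zero])
  continuous_toFun := Continuous.subtype_mk
    ((continuous_shiftN D 1).comp continuous_subtype_val) _
  continuous_invFun := Continuous.subtype_mk
    ((continuous_shiftN D (-1)).comp continuous_subtype_val) _

lemma SH_pow_val : ∀ (n : ℤ) (z : {z : Om D // z ∈ XS D}),
    ((SH D ^ n) z).val = shiftN D n z.val := by
  intro n
  induction n using Int.induction_on with
  | zero =>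
    intro z
    rw [zpow_zero]
    show z.val = shiftN D 0 z.val
    rw [shiftN_zero]
  | succ n IH =>
    intro z
    rw [zpow_add_one]
    show ((SH D ^ (n:ℤ)) (SH D z)).val = _
    rw [IH (SH D z)]
    show shiftN D n (shiftN D 1 z.val) = _
    rw [shiftN_shiftN]
  | pred n IH =>
    intro z
    rw [zpow_sub_one]
    show ((SH D ^ (-n:ℤ)) ((SH D)⁻¹ z)).val = _
    rw [IH ((SH D)⁻¹ z)]
    show shiftN D (-n) (shiftN D (-1) z.val) = _
    rw [shiftN_shiftN, show (-(n:ℤ) + -1) = -(n:ℤ) - 1 by ring]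

lemma dense_orbit (y : {z : Om D // z ∈ XS D}) :
    Dense (Set.range fun n : ℤ => (SH D ^ n) y) := by
  rw [dense_iff_inter_open]
  intro U hU hUne
  obtain ⟨z, hzU⟩ := hUne
  obtain ⟨V, hV, rfl⟩ := isOpen_induced_iff.1 hU
  have hzV : z.val ∈ V := hzU
  obtain ⟨M, N, hW⟩ := window_of_open D hV hzV
  obtain ⟨n, hn⟩ := min_core D y.prop z.prop M N
  refine ⟨(SH D ^ n) y, ?_, ⟨n, rfl⟩⟩
  show ((SH D ^ n) y).val ∈ V
  rw [SH_pow_val]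
  exact hW _ hn

lemma xt_infinite : Infinite {z : Om D // z ∈ XS D} := by
  refine Infinite.of_injective
    (fun n : ℤ => (⟨shiftN D n (xpt D), shiftN_mem D (xpt_mem D) n⟩ :
      {z : Om D // z ∈ XS D})) ?_
  intro n n' h
  have h2 : shiftN D n (xpt D) = shiftN D n' (xpt D) := congrArg Subtype.val h
  by_contra hne
  have h3 : shiftN D (n - n') (xpt D) = xpt D := by
    have h4 := congrArg (shiftN D (-n')) h2
    rw [shiftN_shiftN, shiftN_shiftN] at h4
    rw [show -n' + n' = 0 by ring, shiftN_zero] at h4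
    rw [show n - n' = -n' + n by ring]
    exact h4
  refine xpt_aperiodic D (show n - n' ≠ 0 by omega) ?_
  intro j
  exact congrFun h3 (0, j)

lemma xt_perfect : PerfectSpace {z : Om D // z ∈ XS D} := by
  rw [perfectSpace_iff_forall_not_isolated]
  intro u
  by_contra hnb
  rw [Filter.not_neBot] at hnb
  have hopen : IsOpen ({u} : Set {z : Om D // z ∈ XS D}) :=
    (isOpen_singleton_iff_punctured_nhds u).2 hnb
  have hall : ∀ y : {z : Om D // z ∈ XS D}, IsOpen ({y} : Set _) := by
    intro y
    obtain ⟨w, hw1, n, hwn⟩ := dense_iff_inter_open.1 (dense_orbit D y) {u} hopen ⟨u, rfl⟩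
    have hu : (SH D ^ n) y = u := by
      have : (fun n : ℤ => (SH D ^ n) y) n = u := by rw [hwn]; exact hw1
      exact this
    have hset : ({y} : Set _) = (fun v => (SH D ^ n) v) ⁻¹' {u} := by
      ext v
      simp only [Set.mem_singleton_iff, Set.mem_preimage]
      constructor
      · rintro rfl; exact hu
      · intro hv
        exact (EquivLike.injective (SH D ^ n)) (hv.trans hu.symm)
    rw [hset]
    exact IsOpen.preimage (SH D ^ n).continuous hopen
  haveI : DiscreteTopology {z : Om D // z ∈ XS D} := discreteTopology_iff_isOpen_singleton.2 hall
  haveI := xt_infinite D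
  haveI : CompactSpace {z : Om D // z ∈ XS D} := xt_compact D
  haveI : Finite {z : Om D // z ∈ XS D} := finite_of_compact_of_discrete
  exact not_finite {z : Om D // z ∈ XS D}

/-! ### The Γ-action on the subtype -/

noncomputable def rho1 (γ : Γ) :
    {z : Om D // z ∈ XS D} ≃ₜ {z : Om D // z ∈ XS D} where
  toFun := fun z => ⟨acti D γ z.val, acti_mem D z.prop γ⟩
  invFun := fun z => ⟨acti D γ⁻¹ z.val, acti_mem D z.prop γ⁻¹⟩
  left_inv := fun z => Subtype.ext (by
    funext pr
    show D.pi pr.1 γ⁻¹ * (D.pi pr.1 γ * z.val pr) = z.val pr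
    rw [map_inv, inv_mul_cancel_left])
  right_inv := fun z => Subtype.ext (by
    funext pr
    show D.pi pr.1 γ * (D.pi pr.1 γ⁻¹ * z.val pr) = z.val pr
    rw [map_inv, mul_inv_cancel_left])
  continuous_toFun := Continuous.subtype_mk
    ((continuous_acti D γ).comp continuous_subtype_val) _
  continuous_invFun := Continuous.subtype_mk
    ((continuous_acti D γ⁻¹).comp continuous_subtype_val) _

noncomputable def rho : Γ →* ({z : Om D // z ∈ XS D} ≃ₜ {z : Om D // z ∈ XS D}) :=
  MonoidHom.mk' (rho1 D) (by
    intro γ γ'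
    refine Homeomorph.ext fun z => Subtype.ext ?_
    funext pr
    show D.pi pr.1 (γ * γ') * z.val pr = D.pi pr.1 γ * (D.pi pr.1 γ' * z.val pr)
    rw [map_mul, mul_assoc])

lemma rho_inj : Function.Injective (rho D) := by
  refine (injective_iff_map_eq_one (rho D)).2 ?_
  intro γ hγ
  by_contra hne
  obtain ⟨m, hm⟩ := D.sep γ hne
  have h1 : (rho D γ) ⟨xpt D, xpt_mem D⟩ = ⟨xpt D, xpt_mem D⟩ := by rw [hγ]; rfl
  have h2 : acti D γ (xpt D) = xpt D := congrArg Subtype.val h1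
  have h3 := congrFun h2 (m, 0)
  exact hm (mul_eq_right.mp h3)

lemma rho_comm (γ : Γ) (z : {z : Om D // z ∈ XS D}) :
    rho D γ (SH D z) = SH D (rho D γ z) := Subtype.ext rfl

lemma xt_metrizable : MetrizableSpace {z : Om D // z ∈ XS D} := inferInstance
lemma xt_td : TotallyDisconnectedSpace {z : Om D // z ∈ XS D} := inferInstance
lemma xt_ne : Nonempty {z : Om D // z ∈ XS D} := ⟨⟨xpt D, xpt_mem D⟩⟩


/-- Auxiliary: alphabet sequence with special coordinate 0. -/
def mkQ (H : ℕ → Type) : ℕ → Type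
  | 0 => Multiplicative (ZMod 2)
  | k + 1 => H k

def mkQGroup (H : ℕ → Type) (hG : ∀ k, Group (H k)) : ∀ m, Group (mkQ H m)
  | 0 => inferInstanceAs (Group (Multiplicative (ZMod 2)))
  | k + 1 => hG k

def mkQFinite (H : ℕ → Type) (hG : ∀ k, Finite (H k)) : ∀ m, Finite (mkQ H m)
  | 0 => inferInstanceAs (Finite (Multiplicative (ZMod 2)))
  | k + 1 => hG k

def mkQPi (Γ : Type) [Group Γ] (H : ℕ → Type) (hG : ∀ k, Group (H k))
    (π : ∀ k, Γ →* H k) : ∀ m, @MonoidHom Γ (mkQ H m) _ (mkQGroup H hG m).toMonoid.toMulOneClass.toMulOne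
  | 0 => 1
  | k + 1 => π k

variable (Γ : Type) [Group Γ] [Countable Γ]
theorem sepData_exists
    (hres : ∀ γ γ' : Γ, γ ≠ γ' →
      ∃ (H : Type) (_ : Group H) (_ : Finite H), ∃ π : Γ →* H, π γ ≠ π γ') :
    Nonempty (SepData Γ) := by
  obtain ⟨g, hg⟩ := exists_surjective_nat Γ
  -- for each m, pick a finite group and hom
  have key : ∀ m : ℕ, ∃ (H : Type) (_ : Group H) (_ : Finite H), ∃ π : Γ →* H,
      g m ≠ 1 → π (g m) ≠ 1 := by
    intro m
    by_cases h : g m = 1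
    · exact ⟨PUnit, inferInstance, inferInstance, 1, fun h' => absurd h h'⟩
    · obtain ⟨H, hG, hF, π, hπ⟩ := hres (g m) 1 h
      exact ⟨H, hG, hF, π, fun _ => by simpa using hπ⟩
  choose H hG hF π hπ using key
  refine ⟨⟨mkQ H, mkQGroup H hG, mkQFinite H hF, mkQPi Γ H hG π, ?_,
    Multiplicative.ofAdd (1 : ZMod 2), ?_, ?_, ?_⟩⟩
  · intro γ hγ
    obtain ⟨m, hm⟩ := hg γ
    exact ⟨m + 1, by subst hm; exact hπ m hγ⟩
  · show Multiplicative.ofAdd (1 : ZMod 2) ≠ (1 : Multiplicative (ZMod 2))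
    decide
  · show ∀ a : Multiplicative (ZMod 2), a * a = 1
    decide
  · show ∀ a b c : Multiplicative (ZMod 2), a = b ∨ b = c ∨ a = c
    decide


end RFAux

/-- Every countable residually finite group `Γ` is isomorphic to a
subgroup of the centralizer `Aut(S,ℤ)` of some minimal Cantor `ℤ`-system `(X,S,ℤ)`. -/
theorem residually_finite_embeds_in_Z_centralizer
    (Γ : Type) [Group Γ] [Countable Γ]
    (hres : ∀ γ γ' : Γ, γ ≠ γ' →
      ∃ (H : Type) (_ : Group H) (_ : Finite H), ∃ π : Γ →* H, π γ ≠ π γ') :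
    ∃ C : CantorZSys,
      (∀ x : C.X, Dense (Set.range fun n : ℤ => (C.S ^ n) x)) ∧
      ∃ ρ : Γ →* (C.X ≃ₜ C.X), Function.Injective ρ ∧
        ∀ (γ : Γ) (x : C.X), ρ γ (C.S x) = C.S (ρ γ x) := by
  obtain ⟨D⟩ := sepData_exists Γ hres
  haveI : CompactSpace {z : Om D // z ∈ XS D} := xt_compact D
  haveI : MetrizableSpace {z : Om D // z ∈ XS D} := xt_metrizable D
  haveI : TotallyDisconnectedSpace {z : Om D // z ∈ XS D} := xt_td D
  haveI : PerfectSpace {z : Om D // z ∈ XS D} := xt_perfect D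
  haveI : Nonempty {z : Om D // z ∈ XS D} := xt_ne D
  exact ⟨⟨{z : Om D // z ∈ XS D}, SH D⟩, fun y => dense_orbit D y,
    rho D, rho_inj D, fun γ z => rho_comm D γ z⟩
end

section
/- Let (X,T,G) and (Y,S,H) be two aperiodic minimal Cantor systems, where G and H are countable groups. Then there exists a minimal Cantor ℤ-system (Z,R,ℤ) such that the direct product Aut(T,G) × Aut(S,H) is isomorphic to a subgroup of Aut(R,ℤ). -/
open TopologicalSpace

/-- The centralizer `Aut(T,Γ)` of an action `T` of `Γ` by homeomorphisms: the subgroup of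
self-homeomorphisms commuting with every `T γ`. -/
def centralizerSub {X : Type*} [TopologicalSpace X] {Γ : Type*} [Group Γ]
    (T : Γ →* (X ≃ₜ X)) : Subgroup (X ≃ₜ X) where
  carrier := {h | ∀ (γ : Γ) (x : X), h (T γ x) = T γ (h x)}
  one_mem' := fun _ _ => rfl
  mul_mem' := by
    intro a b ha hb γ x
    show a (b (T γ x)) = T γ (a (b x))
    rw [hb, ha]
  inv_mem' := by
    intro a ha γ x
    apply a.injective
    show a (a.symm (T γ x)) = a (T γ (a.symm x))
    rw [ha, a.apply_symm_apply, a.apply_symm_apply]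

namespace CantorEmb

/-! ### The stage function: stage j = 2-adic valuation of 3j+1 -/

lemma three_j_one_ne (j : ℤ) : 3 * j + 1 ≠ 0 := by omega

def stage (j : ℤ) : ℕ := padicValNat 2 (3 * j + 1).natAbs

lemma natAbs_ne (j : ℤ) : (3 * j + 1).natAbs ≠ 0 := by
  simpa using three_j_one_ne j

lemma stage_pow_dvd (j : ℤ) : (2 : ℤ) ^ stage j ∣ 3 * j + 1 := by
  have h : (2 : ℕ) ^ stage j ∣ (3 * j + 1).natAbs := pow_padicValNat_dvd
  have := (Int.natCast_dvd (n := 3 * j + 1)).mpr h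
  simpa using this

lemma stage_pow_succ_not_dvd (j : ℤ) : ¬ (2 : ℤ) ^ (stage j + 1) ∣ 3 * j + 1 := by
  intro h
  have h' : (2:ℕ) ^ (stage j + 1) ∣ (3 * j + 1).natAbs := by
    rw [← Int.natCast_dvd]; simpa using h
  exact pow_succ_padicValNat_not_dvd (natAbs_ne j) h'

lemma stage_eq_of (j : ℤ) (m : ℕ) (h1 : (2:ℤ)^m ∣ 3*j+1) (h2 : ¬ (2:ℤ)^(m+1) ∣ 3*j+1) :
    stage j = m := by
  rcases lt_trichotomy (stage j) m with h | h | h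
  · exact absurd (dvd_trans (pow_dvd_pow 2 h) h1) (stage_pow_succ_not_dvd j)
  · exact h
  · exact absurd (dvd_trans (pow_dvd_pow 2 h) (stage_pow_dvd j)) h2

/-- Stages are translation-stable: adding a multiple of `2^(stage j + 1)` keeps the stage. -/
lemma stage_add (j k : ℤ) (hk : (2:ℤ) ^ (stage j + 1) ∣ k) : stage (j + k) = stage j := by
  have hd : (2:ℤ) ^ (stage j + 1) ∣ 3 * k := Dvd.dvd.mul_left hk 3
  apply stage_eq_of
  · have : (3 : ℤ) * (j + k) + 1 = (3 * j + 1) + 3 * k := by ring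
    rw [this]
    exact dvd_add (stage_pow_dvd j) (dvd_trans (pow_dvd_pow 2 (Nat.le_succ _)) hd)
  · intro hcon
    apply stage_pow_succ_not_dvd j
    have : (3 : ℤ) * j + 1 = (3 * (j + k) + 1) - 3 * k := by ring
    rw [this]
    exact dvd_sub hcon hd

/-- Uniqueness of points within a window of length `2^(m+1)` in a given deep class. -/
lemma class_unique (m : ℕ) (j j' : ℤ) (h1 : (2:ℤ)^(m+1) ∣ 3*j+1) (h2 : (2:ℤ)^(m+1) ∣ 3*j'+1)
    (hj : 0 ≤ j) (hj' : 0 ≤ j') (hb : j < 2^(m+1)) (hb' : j' < 2^(m+1)) : j = j' := by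
  have hdvd : (2:ℤ)^(m+1) ∣ 3 * (j - j') := by
    have : 3 * (j - j') = (3*j+1) - (3*j'+1) := by ring
    rw [this]; exact dvd_sub h1 h2
  have h3 : IsCoprime ((2:ℤ)^(m+1)) 3 := by
    apply IsCoprime.pow_left
    rw [Int.isCoprime_iff_gcd_eq_one]
    decide
  have h4 := h3.dvd_of_dvd_mul_left hdvd
  have h5 : (0:ℤ) < 2^(m+1) := by positivity
  rcases h4 with ⟨t, ht⟩
  have h6 : |j - j'| < 2^(m+1) := abs_lt.mpr ⟨by linarith, by linarith⟩
  rw [ht, abs_mul, abs_pow] at h6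
  simp only [abs_two] at h6
  have h7 : |t| < 1 := by
    by_contra hc
    push_neg at hc
    nlinarith
  have h8 : t = 0 := by
    have := abs_lt.mp h7
    omega
  rw [h8, mul_zero] at ht
  linarith


/-! ### Special marker points `pos` (stage `m` representative) and `hole` -/

def pos : ℕ → ℕ
  | 0 => 0
  | 1 => 3
  | (m+2) => 4 * pos m + 1

def hole : ℕ → ℕ
  | 0 => 1
  | 1 => 1
  | (m+2) => 4 * hole m + 1

lemma stage_four_mul (j : ℤ) (h : 0 ≤ j)  : stage (4 * j + 1) = stage j + 2 := by
  have key : 3 * (4 * j + 1) + 1 = 4 * (3 * j + 1) := by ring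
  apply stage_eq_of
  · rw [key]
    have h4 : (2:ℤ)^(stage j + 2) = 4 * 2^(stage j) := by ring
    rw [h4]
    exact mul_dvd_mul_left 4 (stage_pow_dvd j)
  · rw [key]
    intro hcon
    apply stage_pow_succ_not_dvd j
    have h4 : (2:ℤ)^(stage j + 2 + 1) = 4 * 2^(stage j + 1) := by ring
    rw [h4] at hcon
    exact (mul_dvd_mul_iff_left (by norm_num : (4:ℤ) ≠ 0)).mp hcon

lemma stage_pos_eq (m : ℕ) : stage (pos m) = m := by
  induction m using Nat.twoStepInduction with
  | zero => show stage 0 = 0; apply stage_eq_of <;> norm_num [Int.even_add_one]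
  | one =>
      show stage 3 = 1
      apply stage_eq_of
      · norm_num
      · norm_num
  | more m ih _ =>
      show stage (pos (m+2)) = m + 2
      have : ((pos (m+2) : ℤ)) = 4 * (pos m) + 1 := by
        show ((4 * pos m + 1 : ℕ) : ℤ) = _
        push_cast; ring
      rw [this, stage_four_mul _ (by positivity), ih]

lemma pos_lt (m : ℕ) : pos m < 2^(m+1) := by
  induction m using Nat.twoStepInduction with
  | zero => norm_num [pos]
  | one => norm_num [pos]
  | more m ih _ =>
      show 4 * pos m + 1 < 2^(m+3)
      have : 2^(m+3) = 4 * 2^(m+1) := by ring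
      omega

lemma hole_dvd (m : ℕ) : (2:ℤ)^(m+1) ∣ 3 * (hole m) + 1 := by
  induction m using Nat.twoStepInduction with
  | zero => norm_num [hole]
  | one => norm_num [hole]
  | more m ih _ =>
      show (2:ℤ)^(m+3) ∣ 3 * ((4 * hole m + 1 : ℕ) : ℤ) + 1
      have key : 3 * ((4 * hole m + 1 : ℕ) : ℤ) + 1 = 4 * (3 * hole m + 1) := by push_cast; ring
      rw [key]
      have : (2:ℤ)^(m+3) = 4 * 2^(m+1) := by ring
      rw [this]
      exact mul_dvd_mul_left 4 ih

lemma stage_hole_even (m : ℕ) : Even (stage (hole m)) := by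
  induction m using Nat.twoStepInduction with
  | zero =>
      have : stage ((hole 0 : ℕ) : ℤ) = 2 := by
        show stage 1 = 2
        apply stage_eq_of <;> norm_num
      rw [this]; exact even_two
  | one =>
      have : stage ((hole 1 : ℕ) : ℤ) = 2 := by
        show stage 1 = 2
        apply stage_eq_of <;> norm_num
      rw [this]; exact even_two
  | more m ih _ =>
      have : ((hole (m+2) : ℕ) : ℤ) = 4 * (hole m) + 1 := by
        show ((4 * hole m + 1 : ℕ) : ℤ) = _
        push_cast; ring
      rw [this, stage_four_mul _ (by positivity)]
      exact ih.add even_two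

lemma hole_lt (m : ℕ) : hole m < 2^(m+1) := by
  induction m using Nat.twoStepInduction with
  | zero => norm_num [hole]
  | one => norm_num [hole]
  | more m ih _ =>
      show 4 * hole m + 1 < 2^(m+3)
      have : 2^(m+3) = 4 * 2^(m+1) := by ring
      omega

/-- General uniqueness within a window. -/
lemma window_unique (m : ℕ) (j j' : ℤ) (hdvd : (2:ℤ)^(m+1) ∣ 3*(j - j'))
    (hj : 0 ≤ j) (hj' : 0 ≤ j') (hb : j < 2^(m+1)) (hb' : j' < 2^(m+1)) : j = j' := by
  have h3 : IsCoprime ((2:ℤ)^(m+1)) 3 := by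
    apply IsCoprime.pow_left
    rw [Int.isCoprime_iff_gcd_eq_one]
    decide
  have h4 := h3.dvd_of_dvd_mul_left hdvd
  rcases h4 with ⟨t, ht⟩
  have h6 : |j - j'| < 2^(m+1) := abs_lt.mpr ⟨by linarith, by linarith⟩
  rw [ht, abs_mul, abs_pow] at h6
  simp only [abs_two] at h6
  have h7 : |t| < 1 := by
    by_contra hc
    push_neg at hc
    nlinarith
  have h8 : t = 0 := by
    have := abs_lt.mp h7
    omega
  rw [h8, mul_zero] at ht
  linarith

/-- Two points of the same stage `m` in the base window coincide. -/
lemma stage_point_unique (m : ℕ) (j j' : ℤ) (h : stage j = m) (h' : stage j' = m)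
    (hj : 0 ≤ j) (hj' : 0 ≤ j') (hb : j < 2^(m+1)) (hb' : j' < 2^(m+1)) : j = j' := by
  apply window_unique m j j' _ hj hj' hb hb'
  obtain ⟨a, ha⟩ := stage_pow_dvd j
  obtain ⟨b, hb2⟩ := stage_pow_dvd j'
  rw [h] at ha; rw [h'] at hb2
  have ha' : ¬ (2:ℤ) ∣ a := by
    intro ⟨u, hu⟩
    apply stage_pow_succ_not_dvd j
    rw [h, ha, hu, pow_succ]
    exact ⟨u, by ring⟩
  have hb' : ¬ (2:ℤ) ∣ b := by
    intro ⟨u, hu⟩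
    apply stage_pow_succ_not_dvd j'
    rw [h', hb2, hu, pow_succ]
    exact ⟨u, by ring⟩
  have hab : (2:ℤ) ∣ (a - b) := by
    rcases Int.even_or_odd a with he | ho
    · exact absurd he.two_dvd ha'
    rcases Int.even_or_odd b with he | ho'
    · exact absurd he.two_dvd hb'
    rcases ho with ⟨u, hu⟩; rcases ho' with ⟨v, hv⟩
    exact ⟨u - v, by rw [hu, hv]; ring⟩
  rcases hab with ⟨u, hu⟩
  refine ⟨u, ?_⟩
  have h9 : a - b = 2 * u := hu
  have h10 : 3 * (j - j') = (3*j+1) - (3*j'+1) := by ring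
  rw [h10, ha, hb2, pow_succ]
  linear_combination (2:ℤ)^m * h9


/-! ### The cocycle built from letters -/

section Cocycle

variable {L : Type*} [Group L]

/-- letter at integer position `j`, given the per-stage letters `x`. -/
def wl (x : ℕ → L) (j : ℤ) : L := x (stage j)

/-- `seg x a d` = ordered product of letters over `[a, a+d)` (decreasing index order). -/
def seg (x : ℕ → L) (a : ℤ) : ℕ → L
  | 0 => 1
  | (d+1) => wl x (a + d) * seg x a d

/-- the cocycle: `c x n` = signed product of letters over `[0,n)`. -/
noncomputable def coc (x : ℕ → L) (n : ℤ) : L :=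
  if 0 ≤ n then seg x 0 n.toNat else (seg x n (-n).toNat)⁻¹

lemma coc_zero (x : ℕ → L) : coc x 0 = 1 := by simp [coc, seg]

lemma seg_succ_left (x : ℕ → L) (a : ℤ) (d : ℕ) :
    seg x a (d+1) = seg x (a+1) d * wl x a := by
  induction d with
  | zero => simp [seg]
  | succ d ih =>
      show wl x (a + (d+1)) * seg x a (d+1) = (wl x (a + 1 + d) * seg x (a+1) d) * wl x a
      rw [ih]
      have : a + 1 + (d:ℤ) = a + (d+1) := by push_cast; ring
      rw [this, mul_assoc]

lemma coc_succ (x : ℕ → L) (j : ℤ) : coc x (j + 1) = wl x j * coc x j := by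
  rcases le_or_gt 0 j with h | h
  · rw [coc, coc, if_pos (by omega), if_pos h]
    have h1 : (j+1).toNat = j.toNat + 1 := by omega
    rw [h1]
    show wl x ((0:ℤ) + j.toNat) * _ = _
    have h2 : ((0:ℤ) + j.toNat) = j := by omega
    rw [h2]
  · rcases eq_or_lt_of_le (by omega : j + 1 ≤ 0) with h0 | h0
    · -- j = -1
      have hj : j = -1 := by omega
      subst hj
      norm_num [coc]
      show (1:L) = wl x (-1) * (seg x (-1) 1)⁻¹
      have : seg x (-1) 1 = wl x (-1) := by
        show wl x (-1 + (0:ℕ)) * seg x (-1) 0 = _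
        simp [seg]
      rw [this, mul_inv_cancel]
    · rw [coc, coc, if_neg (by omega), if_neg (by omega)]
      set d := (-(j+1)).toNat with hdd
      have hd : (-j).toNat = d + 1 := by omega
      rw [hd, seg_succ_left]
      group

lemma coc_pred (x : ℕ → L) (j : ℤ) : coc x j = (wl x j)⁻¹ * coc x (j + 1) := by
  rw [coc_succ, inv_mul_cancel_left]

/-- goodness on the nonnegative side. -/
lemma coc_add_pos (x : ℕ → L) (k : ℤ) (n : ℕ)
    (hw : ∀ i : ℤ, 0 ≤ i → i < n → wl x (i + k) = wl x i) :
    coc x (n + k) = coc x n * coc x k := by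
  induction n with
  | zero => simp [coc_zero]
  | succ n ih =>
      have h1 : ((n+1 : ℕ) : ℤ) + k = ((n:ℤ) + k) + 1 := by push_cast; ring
      have h2 : ((n+1 : ℕ) : ℤ) = (n:ℤ) + 1 := by push_cast; ring
      rw [h1, h2, coc_succ, coc_succ, ih (fun i h1 h2 => hw i h1 (by omega)),
        hw n (by positivity) (by omega), mul_assoc]

/-- goodness on the negative side. -/
lemma coc_add_neg (x : ℕ → L) (k : ℤ) (n : ℕ)
    (hw : ∀ i : ℤ, -n ≤ i → i < 0 → wl x (i + k) = wl x i) :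
    coc x (-n + k) = coc x (-n) * coc x k := by
  induction n with
  | zero => simp [coc_zero]
  | succ n ih =>
      have h1 : (-(n+1 : ℕ) : ℤ) + k = (-(n:ℤ) - 1) + k := by push_cast; ring
      have h2 : (-((n+1 : ℕ)) : ℤ) = -(n:ℤ) - 1 := by push_cast; ring
      have e1 : coc x (-(n:ℤ) - 1 + k) = (wl x (-(n:ℤ)-1+k))⁻¹ * coc x (-(n:ℤ) + k) := by
        rw [coc_pred x (-(n:ℤ) - 1 + k)]
        have : -(n:ℤ) - 1 + k + 1 = -(n:ℤ) + k := by ring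
        rw [this]
      have e2 : coc x (-(n:ℤ) - 1) = (wl x (-(n:ℤ)-1))⁻¹ * coc x (-(n:ℤ)) := by
        rw [coc_pred x (-(n:ℤ) - 1)]
        have : -(n:ℤ) - 1 + 1 = -(n:ℤ) := by ring
        rw [this]
      rw [h1, h2, e1, e2, ih (fun i hi1 hi2 => hw i (by push_cast; omega) hi2)]
      rw [hw (-(n:ℤ)-1) (by push_cast; omega) (by omega)]
      group

/-- goodness: if letters match on the window then the cocycle is multiplicative there. -/
lemma coc_add (x : ℕ → L) (W : ℕ) (k i : ℤ)
    (hw : ∀ i' : ℤ, -W ≤ i' → i' < W → wl x (i' + k) = wl x i')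
    (hi1 : -W ≤ i) (hi2 : i ≤ W) :
    coc x (i + k) = coc x i * coc x k := by
  rcases le_or_gt 0 i with h | h
  · have : i = ((i.toNat : ℕ) : ℤ) := by omega
    rw [this]
    apply coc_add_pos
    intro i' h1 h2
    exact hw i' (by omega) (by omega)
  · have : i = -(((-i).toNat : ℕ) : ℤ) := by omega
    rw [this]
    apply coc_add_neg
    intro i' h1 h2
    exact hw i' (by omega) (by omega)

/-- the scale bound for a window. -/
noncomputable def Ebound (W : ℕ) : ℕ := (Finset.Icc (-(W:ℤ)) W).sup fun i => stage i + 1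

lemma stage_le_Ebound (W : ℕ) (i : ℤ) (h1 : -W ≤ i) (h2 : i ≤ W) :
    stage i + 1 ≤ Ebound W :=
  Finset.le_sup (f := fun i => stage i + 1) (Finset.mem_Icc.mpr ⟨h1, h2⟩)

lemma wl_match (x : ℕ → L) (i k : ℤ) (h : (2:ℤ)^(stage i + 1) ∣ k) :
    wl x (i + k) = wl x i := by
  unfold wl
  rw [stage_add i k h]

/-- Main goodness statement: at scale `Ebound W`, the cocycle is multiplicative on window `W`. -/
lemma coc_good (x : ℕ → L) (W : ℕ) (k i : ℤ) (hk : (2:ℤ)^(Ebound W) ∣ k)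
    (hi1 : -W ≤ i) (hi2 : i ≤ W) :
    coc x (i + k) = coc x i * coc x k := by
  apply coc_add x W k i _ hi1 hi2
  intro i' h1 h2
  exact wl_match x i' k (dvd_trans (pow_dvd_pow 2 (stage_le_Ebound W i' h1 (by omega))) hk)

lemma seg_congr (x₁ x₂ : ℕ → L) (a : ℤ) (d : ℕ)
    (h : ∀ i : ℤ, a ≤ i → i < a + d → x₁ (stage i) = x₂ (stage i)) :
    seg x₁ a d = seg x₂ a d := by
  induction d with
  | zero => rfl
  | succ d ih =>
      show wl x₁ (a+d) * seg x₁ a d = wl x₂ (a+d) * seg x₂ a d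
      rw [ih (fun i h1 h2 => h i h1 (by push_cast at h2 ⊢; omega))]
      congr 1
      exact h (a+d) (by omega) (by push_cast; omega)

lemma seg_split (x : ℕ → L) (a : ℤ) (d e : ℕ) :
    seg x a (d + e) = seg x (a + d) e * seg x a d := by
  induction e with
  | zero => simp [seg]
  | succ e ih =>
      have h1 : d + (e+1) = (d + e) + 1 := by ring
      rw [h1]
      show wl x (a + (d+e : ℕ)) * seg x a (d+e) = (wl x (a + d + e) * seg x (a+d) e) * seg x a d
      rw [ih, mul_assoc]
      congr 2
      push_cast; ring

end Cocycle


/-! ### Choosing the letters to realize every group element at every scale -/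

section Letters

variable {L : Type*} [Group L]

variable (e : ℕ → ℕ × L)

def Nr : ℕ → ℕ
  | 0 => (e 0).1
  | (r+1) => max (e (r+1)).1 (Nr r + 1)

def mseq (r : ℕ) : ℕ := 2 * Nr e r + 1

lemma Nr_lt (r : ℕ) : Nr e r < Nr e (r+1) := by
  simp only [Nr]; omega

lemma Nr_mono : StrictMono (Nr e) := strictMono_nat_of_lt_succ (Nr_lt e)

lemma e_fst_le (r : ℕ) : (e r).1 ≤ Nr e r := by
  cases r with
  | zero => simp [Nr]
  | succ r => simp [Nr]

lemma mseq_mono : StrictMono (mseq e) := fun a b h => by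
  have := Nr_mono e h
  simp only [mseq]; omega

lemma mseq_odd (r : ℕ) : ¬ Even (mseq e r) := by
  simp [mseq, Nat.even_add_one, Nat.even_mul]

lemma le_mseq (r : ℕ) : r ≤ mseq e r := by
  have : r ≤ Nr e r := by
    induction r with
    | zero => exact Nat.zero_le _
    | succ r ih => have := Nr_lt e r; omega
  simp only [mseq]; omega

noncomputable def solA (y : ℕ → L) (m : ℕ) : L :=
  seg y ((pos m : ℤ) + 1) (2^(m+1) - pos m - 1)

noncomputable def solB (y : ℕ → L) (m : ℕ) : L := seg y 0 (pos m)

noncomputable def F : ℕ → (ℕ → L)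
  | 0 => fun _ => 1
  | (r+1) => Function.update (F r) (mseq e r)
      ((solA (F r) (mseq e r))⁻¹ * (e r).2 * (solB (F r) (mseq e r))⁻¹)

noncomputable def xlet : ℕ → L := fun s => F e (s+1) s

lemma F_stable (r r' s : ℕ) (h : r ≤ r') (hs : s < mseq e r) : F e r' s = F e r s := by
  induction r' with
  | zero => have : r = 0 := by omega
            rw [this]
  | succ r' ih =>
      rcases Nat.lt_or_ge r (r'+1) with h1 | h1
      · have h2 : r ≤ r' := by omega
        have h3 : s ≠ mseq e r' := by
          have : mseq e r ≤ mseq e r' := (mseq_mono e).le_iff_le.mpr h2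
          omega
        show Function.update (F e r') (mseq e r') _ s = F e r s
        rw [Function.update_of_ne h3]
        exact ih h2
      · have : r = r' + 1 := by omega
        rw [this]

lemma xlet_lt (r s : ℕ) (hs : s < mseq e r) : xlet e s = F e r s := by
  have hs1 : s < mseq e (s+1) := by
    have := le_mseq e (s+1); omega
  rcases Nat.le_total (s+1) r with h | h
  · rw [xlet, F_stable e (s+1) r s h hs1]
  · rw [xlet, F_stable e r (s+1) s h hs]

lemma xlet_mseq (r : ℕ) :
    xlet e (mseq e r) =
      (solA (F e r) (mseq e r))⁻¹ * (e r).2 * (solB (F e r) (mseq e r))⁻¹ := by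
  have h1 : mseq e r < mseq e (r+1) := mseq_mono e (Nat.lt_succ_self r)
  have h2 : xlet e (mseq e r) = F e (r+1) (mseq e r) := by
    have hs1 : mseq e r < mseq e (mseq e r + 1) := by
      have := le_mseq e (mseq e r + 1); omega
    rcases Nat.le_total (mseq e r + 1) (r+1) with h | h
    · rw [xlet, F_stable e (mseq e r + 1) (r+1) _ h hs1]
    · rw [xlet, F_stable e (r+1) (mseq e r + 1) _ h h1]
  rw [h2]
  show Function.update (F e r) (mseq e r) _ (mseq e r) = _
  rw [Function.update_self]

lemma F_one (r s : ℕ) (h : ∀ ρ, ρ < r → mseq e ρ ≠ s) : F e r s = 1 := by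
  induction r with
  | zero => rfl
  | succ r ih =>
      show Function.update (F e r) (mseq e r) _ s = 1
      rw [Function.update_of_ne (Ne.symm (h r (Nat.lt_succ_self r))), ih (fun ρ hρ => h ρ (by omega))]

lemma xlet_even (s : ℕ) (h : Even s) : xlet e s = 1 := by
  rw [xlet]
  apply F_one
  intro ρ _ hc
  exact mseq_odd e ρ (hc ▸ h)

/-- key step: identifying letters on the window `[0, 2^(m+1))` minus the `pos` point. -/
lemma stage_in_window (r : ℕ) (i : ℤ) (h0 : 0 ≤ i) (hi : i < 2^(mseq e r + 1))
    (hne : i ≠ (pos (mseq e r) : ℤ)) :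
    xlet e (stage i) = F e r (stage i) := by
  set m := mseq e r with hm
  rcases lt_trichotomy (stage i) m with h | h | h
  · exact xlet_lt e r (stage i) h
  · exfalso
    apply hne
    apply stage_point_unique m i (pos m) h (by rw [stage_pos_eq]) h0 (by positivity) hi
    exact_mod_cast (by exact_mod_cast pos_lt m : ((pos m : ℤ)) < ((2^(m+1) : ℕ) : ℤ))
  · -- deep point: must be the hole, whose stage is even
    have hdvd : (2:ℤ)^(m+1) ∣ 3*i+1 :=
      dvd_trans (pow_dvd_pow 2 (by omega)) (stage_pow_dvd i)
    have hih : i = (hole m : ℤ) := by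
      apply window_unique m i (hole m) _ h0 (by positivity) hi
      · exact_mod_cast (by exact_mod_cast hole_lt m : ((hole m : ℤ)) < ((2^(m+1) : ℕ) : ℤ))
      · have h2 : 3 * (i - hole m) = (3*i+1) - (3*(hole m)+1) := by ring
        rw [h2]
        exact dvd_sub hdvd (hole_dvd m)
    have heven : Even (stage i) := by rw [hih]; exact stage_hole_even m
    rw [xlet_even e _ heven]
    rw [F_one]
    intro ρ _ hc
    exact mseq_odd e ρ (hc ▸ heven)

lemma pos_add_sub (m : ℕ) : (pos m + 1) + (2^(m+1) - pos m - 1) = 2^(m+1) := by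
  have := pos_lt m
  omega

/-- The main realization: the cocycle takes the demanded value at the demanded scale. -/
lemma coc_realize (r : ℕ) :
    coc (xlet e) ((2:ℤ)^(mseq e r + 1)) = (e r).2 := by
  obtain ⟨m, hm⟩ : ∃ m, mseq e r = m := ⟨_, rfl⟩
  have hwin : ∀ i : ℤ, 0 ≤ i → i < 2^(m+1) → i ≠ (pos m : ℤ) →
      xlet e (stage i) = F e r (stage i) := by
    intro i h0 hi hne
    exact stage_in_window e r i h0 (by rw [hm]; exact hi) (by rw [hm]; exact hne)
  rw [hm]
  have h0 : coc (xlet e) ((2:ℤ)^(m+1)) = seg (xlet e) 0 (2^(m+1) : ℕ) := by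
    rw [coc, if_pos (by positivity)]
    congr 1
  have hplt : ((pos m : ℕ) : ℤ) < 2^(m+1) := by exact_mod_cast pos_lt m
  have hcast : (((pos m) :ℤ) + 1) + ((2^(m+1) - pos m - 1 : ℕ) : ℤ) = 2^(m+1) := by
    exact_mod_cast pos_add_sub m
  rw [h0, ← pos_add_sub m, seg_split]
  have hseg1 : seg (xlet e) 0 (pos m + 1) =
      wl (xlet e) ((0:ℤ) + ((pos m : ℕ):ℤ)) * seg (xlet e) 0 (pos m) := rfl
  rw [hseg1]
  have hA : seg (xlet e) ((0:ℤ) + ((pos m + 1 : ℕ) : ℤ)) (2^(m+1) - pos m - 1)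
      = solA (F e r) m := by
    rw [solA]
    have hcoe : (0:ℤ) + ((pos m + 1 : ℕ) : ℤ) = ((pos m : ℕ) : ℤ) + 1 := by push_cast; ring
    rw [hcoe]
    apply seg_congr
    intro i h1 h2
    apply hwin i (by omega) (by linarith) (by omega)
  have hB : seg (xlet e) 0 (pos m) = solB (F e r) m := by
    rw [solB]
    apply seg_congr
    intro i h1 h2
    apply hwin i (by omega) (by linarith) (by omega)
  have hw : wl (xlet e) ((0:ℤ) + ((pos m : ℕ):ℤ)) = xlet e m := by
    rw [wl]
    have hz : (0:ℤ) + ((pos m : ℕ):ℤ) = ((pos m : ℕ):ℤ) := by ring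
    rw [hz, stage_pos_eq]
  have hx := xlet_mseq e r
  rw [hm] at hx
  rw [hA, hB, hw, hx]
  group

/-- **Existence of the cocycle**: all demands are realized. -/
theorem coc_exists (he : Function.Surjective e) (E : ℕ) (γ : L) :
    ∃ k : ℤ, (2:ℤ)^E ∣ k ∧ coc (xlet e) k = γ := by
  obtain ⟨r, hr⟩ := he (E, γ)
  refine ⟨(2:ℤ)^(mseq e r + 1), ?_, ?_⟩
  · apply pow_dvd_pow
    have h1 : (e r).1 = E := by rw [hr]
    have := e_fst_le e r
    simp only [mseq]
    omega
  · rw [coc_realize e r, hr]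

end Letters


/-! ### Dynamics: the orbit closure of the cocycle line -/

section Dynamics

variable {Om : Type*} [TopologicalSpace Om]

/-- translation by `k` on bi-infinite sequences. -/
def tr (k : ℤ) (f : ℤ → Om) : ℤ → Om := fun n => f (n + k)

lemma tr_tr (k l : ℤ) (f : ℤ → Om) : tr k (tr l f) = tr (k + l) f := by
  funext n
  show f (n + k + l) = f (n + (k + l))
  congr 1; ring

lemma tr_zero (f : ℤ → Om) : tr 0 f = f := by
  funext n; show f (n + 0) = f n; rw [add_zero]

lemma tr_continuous (k : ℤ) : Continuous (tr (Om := Om) k) :=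
  continuous_pi fun n => continuous_apply (n + k)

/-- translation as a homeomorphism. -/
def trH (k : ℤ) : (ℤ → Om) ≃ₜ (ℤ → Om) where
  toFun := tr k
  invFun := tr (-k)
  left_inv := fun f => by rw [tr_tr]; simp [tr_zero]
  right_inv := fun f => by rw [tr_tr]; simp [tr_zero]
  continuous_toFun := tr_continuous k
  continuous_invFun := tr_continuous (-k)

variable {L : Type*} [Group L]

/-- the line of a point under the cocycle. -/
def lineOf (A : L →* (Om ≃ₜ Om)) (c : ℤ → L) (om : Om) : ℤ → Om := fun n => A (c n) om

/-- Hypotheses on the abstract cocycle. -/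
structure CocycleGood (c : ℤ → L) : Prop where
  zero : c 0 = 1
  good : ∀ W : ℕ, ∃ E : ℕ, ∀ k i : ℤ, (2:ℤ)^E ∣ k → -W ≤ i → i ≤ W → c (i+k) = c i * c k
  ex : ∀ (E : ℕ) (γ : L), ∃ k : ℤ, (2:ℤ)^E ∣ k ∧ c k = γ

variable (A : L →* (Om ≃ₜ Om)) (c : ℤ → L) (om0 : Om)

/-- The phase space: orbit closure of the line of the base point. -/
def ZSet : Set (ℤ → Om) := closure (Set.range fun k : ℤ => tr k (lineOf A c om0))

lemma ZSet_closed : IsClosed (ZSet A c om0) := isClosed_closure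

lemma tr_image_ZSet (k : ℤ) : tr k '' (ZSet A c om0) = ZSet A c om0 := by
  have h1 : tr (Om := Om) k '' (Set.range fun l : ℤ => tr l (lineOf A c om0))
      = Set.range fun l : ℤ => tr l (lineOf A c om0) := by
    ext f
    constructor
    · rintro ⟨g, ⟨l, rfl⟩, rfl⟩
      exact ⟨k + l, (tr_tr k l _).symm⟩
    · rintro ⟨l, rfl⟩
      exact ⟨tr (l - k) (lineOf A c om0), ⟨l - k, rfl⟩, by rw [tr_tr]; congr 1; ring⟩
  show (trH k) '' _ = _
  rw [ZSet, Homeomorph.image_closure]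
  show closure (tr k '' _) = _
  rw [h1]

end Dynamics

lemma homeo_mul_apply {X : Type*} [TopologicalSpace X] (f g : X ≃ₜ X) (x : X) :
    (f * g) x = f (g x) := rfl

lemma homeo_one_apply {X : Type*} [TopologicalSpace X] (x : X) :
    (1 : X ≃ₜ X) x = x := rfl

section Dynamics2

variable {Om : Type*} [TopologicalSpace Om]
variable {L : Type*} [Group L]
variable (A : L →* (Om ≃ₜ Om)) (c : ℤ → L) (om0 : Om)

lemma line_mem_ZSet' (hc : CocycleGood c)
    (hmin : ∀ om : Om, Dense (Set.range fun γ : L => A γ om)) (om : Om) :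
    lineOf A c om ∈ ZSet A c om0 := by
  rw [ZSet, mem_closure_iff]
  intro U hU hxU
  obtain ⟨I, u, hIu, hsub⟩ := isOpen_pi_iff.mp hU _ hxU
  set W : ℕ := I.sup fun a => a.natAbs with hW
  obtain ⟨E, hE⟩ := hc.good W
  set V : Set Om := ⋂ a ∈ I, (A (c a)) ⁻¹' (u a) with hV
  have hVopen : IsOpen V := by
    apply isOpen_biInter_finset
    intro a ha
    exact ((hIu a ha).1).preimage (A (c a)).continuous
  have homV : om ∈ V := by
    rw [hV]
    apply Set.mem_iInter₂.mpr
    intro a ha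
    exact (hIu a ha).2
  obtain ⟨p, ⟨γ, rfl⟩, hpV⟩ := (hmin om0).exists_mem_open hVopen ⟨om, homV⟩
  obtain ⟨k, hk, hck⟩ := hc.ex E γ
  refine ⟨tr k (lineOf A c om0), hsub ?_, ⟨k, rfl⟩⟩
  intro a ha
  show lineOf A c om0 (a + k) ∈ u a
  have hbound : a.natAbs ≤ W := Finset.le_sup (f := fun a : ℤ => a.natAbs) ha
  have hgood : c (a + k) = c a * c k := hE k a hk (by omega) (by omega)
  show A (c (a + k)) om0 ∈ u a
  rw [hgood, map_mul, homeo_mul_apply, hck]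
  have := Set.mem_iInter₂.mp hpV a ha
  exact this

lemma line_base_mem (hc : CocycleGood c)
    (hmin : ∀ om : Om, Dense (Set.range fun γ : L => A γ om)) :
    lineOf A c om0 ∈ ZSet A c om0 := by
  apply subset_closure
  exact ⟨0, tr_zero _⟩


section Approx

variable [CompactSpace Om] [MetrizableSpace Om]

lemma window_approx (hc : CocycleGood c) (ξ : ℤ → Om) (hξ : ξ ∈ ZSet A c om0) (W : ℕ)
    (E : ℕ) (hE : ∀ k i : ℤ, (2:ℤ)^E ∣ k → -W ≤ i → i ≤ W → c (i+k) = c i * c k) :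
    ∃ (r : ℤ) (om' : Om), ∀ n : ℤ, -W ≤ n → n ≤ W → ξ (n - r) = A (c n) om' := by
  classical
  -- ξ is a sequential limit of translates
  obtain ⟨g, hgmem, hgtend⟩ := mem_closure_iff_seq_limit.mp hξ
  choose k hk using hgmem
  set P : ℤ := 2^E with hP
  have hPpos : 0 < P := by positivity
  -- pigeonhole on residues
  set fn : ℕ → Fin (P.toNat) := fun j => ⟨(k j % P).toNat, by
    have h1 := Int.emod_nonneg (k j) (ne_of_gt hPpos)
    have h2 := Int.emod_lt_of_pos (k j) hPpos
    omega⟩ with hfn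
  have : Nonempty (Fin P.toNat) := ⟨fn 0⟩
  obtain ⟨v, hv⟩ := Finite.exists_infinite_fiber fn
  set S : Set ℕ := fn ⁻¹' {v} with hS
  haveI : Infinite S := hv
  set φ := Nat.orderEmbeddingOfSet S with hφ
  have hφmem : ∀ j, fn (φ j) = v := by
    intro j
    have : φ j ∈ S := by
      rw [← Nat.orderEmbeddingOfSet_range S]
      exact ⟨j, rfl⟩
    exact this
  have hφmono : StrictMono φ := φ.strictMono
  set r : ℤ := k (φ 0) % P with hr
  have hres : ∀ j, k (φ j) % P = r := by
    intro j
    have hval : ((fn (φ 0)) : ℕ) = ((fn (φ j)) : ℕ) := by rw [hφmem 0, hφmem j]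
    have hval2 : (k (φ 0) % P).toNat = (k (φ j) % P).toNat := hval
    have h1 := Int.emod_nonneg (k (φ 0)) (ne_of_gt hPpos)
    have h2 := Int.emod_nonneg (k (φ j)) (ne_of_gt hPpos)
    omega
  have hdvd : ∀ j, P ∣ (k (φ j) - r) := by
    intro j
    refine ⟨k (φ j) / P, ?_⟩
    have h := Int.mul_ediv_add_emod (k (φ j)) P
    rw [← hres j]
    linarith
  set p : ℕ → Om := fun j => A (c (k (φ j) - r)) om0 with hp
  obtain ⟨om', -, ψ, hψ, hψtend⟩ := isCompact_univ.tendsto_subseq (x := p)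
    (fun j => Set.mem_univ _)
  refine ⟨r, om', ?_⟩
  intro n hn1 hn2
  have hval : ∀ j, g (φ (ψ j)) (n - r) = A (c n) (p (ψ j)) := by
    intro j
    rw [← hk (φ (ψ j))]
    show lineOf A c om0 ((n - r) + k (φ (ψ j))) = _
    have harg : (n - r) + k (φ (ψ j)) = n + (k (φ (ψ j)) - r) := by ring
    rw [harg]
    show A (c (n + (k (φ (ψ j)) - r))) om0 = _
    rw [hE _ n (hdvd _) hn1 hn2, map_mul, homeo_mul_apply]
  have h1 : Filter.Tendsto (fun j => g (φ (ψ j)) (n - r)) Filter.atTop (nhds (ξ (n - r))) := by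
    have hcoord := (tendsto_pi_nhds.mp hgtend) (n - r)
    exact hcoord.comp ((hφmono.comp hψ).tendsto_atTop)
  have h2 : Filter.Tendsto (fun j => g (φ (ψ j)) (n - r)) Filter.atTop
      (nhds (A (c n) om')) := by
    have hcont := ((A (c n)).continuous.tendsto om').comp hψtend
    refine hcont.congr ?_
    intro j
    exact (hval j).symm
  exact tendsto_nhds_unique h1 h2


/-- **Minimality**: every orbit closure in `Z` contains all of `Z`. -/
lemma min_ZSet (hc : CocycleGood c)
    (hmin : ∀ om : Om, Dense (Set.range fun γ : L => A γ om))
    (ξ : ℤ → Om) (hξ : ξ ∈ ZSet A c om0) :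
    ZSet A c om0 ⊆ closure (Set.range fun k : ℤ => tr k ξ) := by
  classical
  -- Step 1: the base line is in the orbit closure of ξ.
  have hline : lineOf A c om0 ∈ closure (Set.range fun k : ℤ => tr k ξ) := by
    -- diagonal data from window_approx
    have hWA : ∀ W : ℕ, ∃ (r : ℤ) (om' : Om), ∀ n : ℤ, -W ≤ n → n ≤ W →
        ξ (n - r) = A (c n) om' := by
      intro W
      obtain ⟨E, hE⟩ := hc.good W
      exact window_approx A c om0 hc ξ hξ W E hE
    choose rW omW hrom using hWA
    obtain ⟨omS, -, φ, hφ, hφtend⟩ := isCompact_univ.tendsto_subseq (x := omW)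
      (fun j => Set.mem_univ _)
    rw [mem_closure_iff]
    intro U hU hLU
    obtain ⟨I, u, hIu, hsub⟩ := isOpen_pi_iff.mp hU _ hLU
    set W0 : ℕ := I.sup fun a => a.natAbs with hW0
    obtain ⟨E, hE⟩ := hc.good W0
    set V : Set Om := ⋂ a ∈ I, (A (c a)) ⁻¹' (u a) with hV
    have hVopen : IsOpen V := by
      apply isOpen_biInter_finset
      intro a ha
      exact ((hIu a ha).1).preimage (A (c a)).continuous
    have hom0V : om0 ∈ V := by
      apply Set.mem_iInter₂.mpr
      intro a ha
      exact (hIu a ha).2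
    obtain ⟨q, ⟨γ, rfl⟩, hqV⟩ := (hmin omS).exists_mem_open hVopen ⟨om0, hom0V⟩
    obtain ⟨k, hkdvd, hck⟩ := hc.ex E γ
    -- pick a far-enough stage where the approximating point works
    have hev1 : ∀ᶠ j in Filter.atTop, A γ (omW (φ j)) ∈ V := by
      have hcont : Continuous (A γ) := (A γ).continuous
      have : Filter.Tendsto (fun j => A γ (omW (φ j))) Filter.atTop (nhds (A γ omS)) :=
        (hcont.tendsto omS).comp hφtend
      exact this.eventually (hVopen.mem_nhds hqV)
    have hev2 : ∀ᶠ j in Filter.atTop, W0 + k.natAbs ≤ φ j := by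
      apply Filter.eventually_atTop.mpr
      exact ⟨W0 + k.natAbs, fun j hj => le_trans hj (hφ.le_apply)⟩
    obtain ⟨j, hj1, hj2⟩ := (hev1.and hev2).exists
    set W' := φ j with hW'
    set r := rW W' with hrdef
    refine ⟨tr (k - r) ξ, hsub ?_, ⟨k - r, rfl⟩⟩
    intro a ha
    show ξ (a + (k - r)) ∈ u a
    have hbound : a.natAbs ≤ W0 := Finset.le_sup (f := fun a : ℤ => a.natAbs) ha
    have harg : a + (k - r) = (a + k) - r := by ring
    have hwin := hrom W' (a + k) (by omega) (by omega)
    rw [harg, hwin]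
    have hgood : c (a + k) = c a * c k := hE k a hkdvd (by omega) (by omega)
    rw [hgood, map_mul, homeo_mul_apply, hck]
    exact Set.mem_iInter₂.mp hj1 a ha
  -- Step 2: upgrade to all of Z.
  have horb : (Set.range fun k : ℤ => tr k (lineOf A c om0)) ⊆
      closure (Set.range fun k : ℤ => tr k ξ) := by
    rintro f ⟨l, rfl⟩
    have h1 : tr l (lineOf A c om0) ∈ tr l '' closure (Set.range fun k : ℤ => tr k ξ) :=
      ⟨_, hline, rfl⟩
    have h2 : tr (Om := Om) l '' closure (Set.range fun k : ℤ => tr k ξ)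
        = closure (tr l '' (Set.range fun k : ℤ => tr k ξ)) := by
      show (trH l) '' _ = _
      rw [Homeomorph.image_closure]
      rfl
    have h3 : tr (Om := Om) l '' (Set.range fun k : ℤ => tr k ξ) ⊆
        Set.range fun k : ℤ => tr k ξ := by
      rintro f ⟨g, ⟨m, rfl⟩, rfl⟩
      exact ⟨l + m, (tr_tr l m ξ).symm⟩
    rw [h2] at h1
    exact closure_mono h3 h1
  calc ZSet A c om0 = closure (Set.range fun k : ℤ => tr k (lineOf A c om0)) := rfl
    _ ⊆ closure (closure (Set.range fun k : ℤ => tr k ξ)) := closure_mono horb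
    _ = closure (Set.range fun k : ℤ => tr k ξ) := closure_closure

end Approx
end Dynamics2

section SubDyn

variable {Om : Type*} [TopologicalSpace Om]
variable {L : Type*} [Group L]
variable (A : L →* (Om ≃ₜ Om)) (c : ℤ → L) (om0 : Om)

lemma tr_mem_ZSet {f : ℤ → Om} (hf : f ∈ ZSet A c om0) (k : ℤ) : tr k f ∈ ZSet A c om0 := by
  rw [← tr_image_ZSet A c om0 k]
  exact ⟨f, hf, rfl⟩

/-- The restricted shift homeomorphism on the orbit closure. -/
def RZ : ↥(ZSet A c om0) ≃ₜ ↥(ZSet A c om0) where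
  toFun z := ⟨tr 1 z.1, tr_mem_ZSet A c om0 z.2 1⟩
  invFun z := ⟨tr (-1) z.1, tr_mem_ZSet A c om0 z.2 (-1)⟩
  left_inv z := by
    apply Subtype.ext
    show tr (-1) (tr 1 z.1) = z.1
    rw [tr_tr]; norm_num [tr_zero]
  right_inv z := by
    apply Subtype.ext
    show tr 1 (tr (-1) z.1) = z.1
    rw [tr_tr]; norm_num [tr_zero]
  continuous_toFun :=
    Continuous.subtype_mk ((tr_continuous 1).comp continuous_subtype_val) _
  continuous_invFun :=
    Continuous.subtype_mk ((tr_continuous (-1)).comp continuous_subtype_val) _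

lemma RZ_coe (z : ↥(ZSet A c om0)) : ((RZ A c om0) z : ℤ → Om) = tr 1 z.1 := rfl

lemma RZ_inv_coe (z : ↥(ZSet A c om0)) : ((RZ A c om0)⁻¹ z : ℤ → Om) = tr (-1) z.1 := rfl

lemma RZ_zpow (n : ℤ) (z : ↥(ZSet A c om0)) :
    (((RZ A c om0) ^ n) z : ℤ → Om) = tr n z.1 := by
  induction n using Int.induction_on generalizing z with
  | zero => show (z : ℤ → Om) = tr 0 z.1; rw [tr_zero]
  | succ n ih =>
      have h1 : (RZ A c om0) ^ ((n : ℤ) + 1) = (RZ A c om0) ^ (n : ℤ) * (RZ A c om0) :=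
        zpow_add_one _ _
      rw [h1, homeo_mul_apply, ih ((RZ A c om0) z), RZ_coe, tr_tr]
  | pred n ih =>
      have h1 : (RZ A c om0) ^ (-(n : ℤ) - 1) = (RZ A c om0) ^ (-(n:ℤ)) * (RZ A c om0)⁻¹ :=
        zpow_sub_one _ _
      rw [h1, homeo_mul_apply, ih ((RZ A c om0)⁻¹ z), RZ_inv_coe, tr_tr]
      congr 1

variable [CompactSpace Om] [MetrizableSpace Om]

lemma dense_orbit (hc : CocycleGood c)
    (hmin : ∀ om : Om, Dense (Set.range fun γ : L => A γ om))
    (z : ↥(ZSet A c om0)) :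
    Dense (Set.range fun n : ℤ => ((RZ A c om0) ^ n) z) := by
  intro z'
  rw [closure_subtype]
  have himg : (Subtype.val '' Set.range fun n : ℤ => ((RZ A c om0) ^ n) z)
      = Set.range fun n : ℤ => tr n z.1 := by
    ext f
    constructor
    · rintro ⟨g, ⟨n, rfl⟩, rfl⟩
      exact ⟨n, (RZ_zpow A c om0 n z).symm⟩
    · rintro ⟨n, rfl⟩
      exact ⟨((RZ A c om0) ^ n) z, ⟨n, rfl⟩, RZ_zpow A c om0 n z⟩
  rw [himg]
  exact min_ZSet A c om0 hc hmin z.1 z.2 z'.2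

end SubDyn

/-- A compact infinite space with all `ℤ`-orbits dense has no isolated points. -/
lemma perfect_of_minimal {K : Type*} [TopologicalSpace K] [CompactSpace K] [Infinite K]
    (R : K ≃ₜ K) (hmin : ∀ z : K, Dense (Set.range fun n : ℤ => (R ^ n) z)) :
    PerfectSpace K := by
  constructor
  intro z _
  rw [accPt_iff_nhds]
  intro U hU
  by_contra hcon
  push_neg at hcon
  have hUz : U ⊆ {z} := by
    intro y hy
    exact hcon y ⟨hy, Set.mem_univ _⟩
  have hopen : IsOpen ({z} : Set K) := by
    obtain ⟨t, hts, hto, hzt⟩ := mem_nhds_iff.mp hU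
    have : t = {z} := Set.eq_singleton_iff_unique_mem.mpr
      ⟨hzt, fun y hy => hUz (hts hy)⟩
    rw [← this]; exact hto
  have hall : ∀ y : K, ∃ n : ℤ, (R ^ n) y = z := by
    intro y
    obtain ⟨q, ⟨n, rfl⟩, hq⟩ := (hmin y).exists_mem_open hopen ⟨z, rfl⟩
    exact ⟨n, hq⟩
  have hsingleton : ∀ y : K, IsOpen ({y} : Set K) := by
    intro y
    obtain ⟨n, hn⟩ := hall y
    have : ({y} : Set K) = (fun x => (R ^ n) x) ⁻¹' {z} := by
      ext x
      simp only [Set.mem_singleton_iff, Set.mem_preimage]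
      constructor
      · rintro rfl; exact hn
      · intro hx
        exact ((R ^ n) : K ≃ₜ K).injective (hx.trans hn.symm)
    rw [this]
    exact hopen.preimage ((R ^ n) : K ≃ₜ K).continuous
  haveI : DiscreteTopology K := discreteTopology_iff_isOpen_singleton.mpr hsingleton
  haveI : Finite K := finite_of_compact_of_discrete
  exact not_finite K

/-- **Master theorem**: a minimal action of a countable group on a compact metrizable
totally disconnected infinite space, together with a faithful commuting group `P`,
yields a minimal Cantor ℤ-system whose centralizer contains `P`. -/
theorem master {Om : Type} [TopologicalSpace Om] [CompactSpace Om] [MetrizableSpace Om]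
    [TotallyDisconnectedSpace Om] [Nonempty Om] (hinf : Infinite Om)
    {L : Type*} [Group L] [Countable L]
    (A : L →* (Om ≃ₜ Om))
    (hmin : ∀ om : Om, Dense (Set.range fun γ : L => A γ om))
    {P : Type*} [Group P] (π : P →* (Om ≃ₜ Om))
    (hπ : Function.Injective π)
    (hcomm : ∀ (p : P) (γ : L) (om : Om), π p (A γ om) = A γ (π p om)) :
    ∃ C : CantorZSys,
      (∀ z : C.X, Dense (Set.range fun n : ℤ => (C.S ^ n) z)) ∧
      ∃ Φ : P →* (C.X ≃ₜ C.X), Function.Injective Φ ∧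
        ∀ (p : P) (z : C.X), Φ p (C.S z) = C.S (Φ p z) := by
  classical
  obtain ⟨e, he⟩ := exists_surjective_nat (ℕ × L)
  set c : ℤ → L := coc (xlet e) with hcdef
  have hc : CocycleGood c := ⟨coc_zero _,
    fun W => ⟨Ebound W, fun k i hk h1 h2 => coc_good (xlet e) W k i hk h1 h2⟩,
    fun E γ => coc_exists e he E γ⟩
  set om0 : Om := Classical.arbitrary Om with hom0
  have hcomp : IsCompact (ZSet A c om0) := (ZSet_closed A c om0).isCompact
  haveI : CompactSpace ↥(ZSet A c om0) := isCompact_iff_compactSpace.mp hcomp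
  haveI : Nonempty ↥(ZSet A c om0) := ⟨⟨lineOf A c om0, line_base_mem A c om0 hc hmin⟩⟩
  haveI : Infinite ↥(ZSet A c om0) := by
    apply Infinite.of_injective
      (fun om : Om => (⟨lineOf A c om, line_mem_ZSet' A c om0 hc hmin om⟩ : ↥(ZSet A c om0)))
    intro a b hab
    have h0 := congrArg (fun z : ↥(ZSet A c om0) => (z : ℤ → Om) 0) hab
    simpa [lineOf, hc.zero, map_one, homeo_one_apply] using h0
  have hdense := dense_orbit A c om0 hc hmin
  haveI : PerfectSpace ↥(ZSet A c om0) := perfect_of_minimal (RZ A c om0) hdense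
  -- the diagonal action of `P` preserves the phase space
  have hDmem : ∀ (p : P) (z : ℤ → Om), z ∈ ZSet A c om0 →
      (fun n => π p (z n)) ∈ ZSet A c om0 := by
    intro p z hz
    set D : (ℤ → Om) ≃ₜ (ℤ → Om) := Homeomorph.piCongrRight (fun _ : ℤ => π p) with hD
    have h1 : D '' (Set.range fun k : ℤ => tr k (lineOf A c om0)) ⊆ ZSet A c om0 := by
      rintro f ⟨g, ⟨k, rfl⟩, rfl⟩
      have heq : D (tr k (lineOf A c om0)) = tr k (lineOf A c (π p om0)) := by
        funext n
        show π p (A (c (n + k)) om0) = A (c (n + k)) (π p om0)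
        exact hcomm p _ om0
      rw [heq]
      exact tr_mem_ZSet A c om0 (line_mem_ZSet' A c om0 hc hmin (π p om0)) k
    have h2 : D z ∈ closure (D '' (Set.range fun k : ℤ => tr k (lineOf A c om0))) := by
      rw [← Homeomorph.image_closure]
      exact ⟨z, hz, rfl⟩
    exact closure_minimal h1 (ZSet_closed A c om0) h2
  refine ⟨⟨↥(ZSet A c om0), RZ A c om0⟩, hdense, ?_⟩
  have hmapinv : ∀ (p : P) (x : Om), π p⁻¹ (π p x) = x := by
    intro p x
    rw [map_inv]
    exact (π p).symm_apply_apply x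
  have hmapinv' : ∀ (p : P) (x : Om), π p (π p⁻¹ x) = x := by
    intro p x
    rw [map_inv]
    exact (π p).apply_symm_apply x
  set Φf : P → (↥(ZSet A c om0) ≃ₜ ↥(ZSet A c om0)) := fun p =>
    { toFun := fun z => ⟨fun n => π p (z.1 n), hDmem p z.1 z.2⟩
      invFun := fun z => ⟨fun n => π p⁻¹ (z.1 n), hDmem p⁻¹ z.1 z.2⟩
      left_inv := fun z => by
        apply Subtype.ext
        funext n
        exact hmapinv p (z.1 n)
      right_inv := fun z => by
        apply Subtype.ext
        funext n
        exact hmapinv' p (z.1 n)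
      continuous_toFun := Continuous.subtype_mk
        (continuous_pi fun n =>
          (π p).continuous.comp ((continuous_apply n).comp continuous_subtype_val)) _
      continuous_invFun := Continuous.subtype_mk
        (continuous_pi fun n =>
          (π p⁻¹).continuous.comp ((continuous_apply n).comp continuous_subtype_val)) _ }
    with hΦf
  have hΦmul : ∀ p q : P, Φf (p * q) = Φf p * Φf q := by
    intro p q
    apply Homeomorph.ext
    intro z
    apply Subtype.ext
    funext n
    show π (p * q) (z.1 n) = π p (π q (z.1 n))
    rw [map_mul, homeo_mul_apply]
  refine ⟨{ toFun := Φf, map_one' := ?_, map_mul' := hΦmul }, ?_, ?_⟩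
  · apply Homeomorph.ext
    intro z
    apply Subtype.ext
    funext n
    show π 1 (z.1 n) = z.1 n
    rw [map_one, homeo_one_apply]
  · rw [injective_iff_map_eq_one]
    intro p hp
    apply hπ
    have hfix : ∀ om : Om, π p om = om := by
      intro om
      have hz : (⟨lineOf A c om, line_mem_ZSet' A c om0 hc hmin om⟩ : ↥(ZSet A c om0))
          ∈ Set.univ := Set.mem_univ _
      have := congrArg (fun h : (↥(ZSet A c om0) ≃ₜ ↥(ZSet A c om0)) =>
        ((h ⟨lineOf A c om, line_mem_ZSet' A c om0 hc hmin om⟩ : ↥(ZSet A c om0)) : ℤ → Om) 0) hp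
      simp only at this
      have hl0 : lineOf A c om 0 = om := by
        show A (c 0) om = om
        rw [hc.zero, map_one, homeo_one_apply]
      calc π p om = π p (lineOf A c om 0) := by rw [hl0]
        _ = ((Φf p ⟨lineOf A c om, line_mem_ZSet' A c om0 hc hmin om⟩ : ↥(ZSet A c om0))
              : ℤ → Om) 0 := rfl
        _ = ((1 : ↥(ZSet A c om0) ≃ₜ ↥(ZSet A c om0))
              ⟨lineOf A c om, line_mem_ZSet' A c om0 hc hmin om⟩ : ℤ → Om) 0 := this
        _ = lineOf A c om 0 := rfl
        _ = om := hl0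
    apply Homeomorph.ext
    intro om
    rw [map_one, homeo_one_apply]
    exact hfix om
  · intro p z
    apply Subtype.ext
    funext n
    rfl


section Helpers

variable {α β : Type*} [TopologicalSpace α] [TopologicalSpace β]

lemma dense_image_homeo (E : α ≃ₜ β) {s : Set α} (hs : Dense s) : Dense (E '' s) := by
  rw [dense_iff_closure_eq] at hs ⊢
  rw [← Homeomorph.image_closure, hs, Set.image_univ, E.surjective.range_eq]

lemma td_homeo (E : α ≃ₜ β) [TotallyDisconnectedSpace α] : TotallyDisconnectedSpace β := by
  refine ⟨fun t _ ht => ?_⟩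
  have h2 := TotallyDisconnectedSpace.isTotallyDisconnected_univ (E.symm '' t)
    (Set.subset_univ _) (ht.image _ E.symm.continuous.continuousOn)
  intro a ha b hb
  have := h2 ⟨a, ha, rfl⟩ ⟨b, hb, rfl⟩
  exact E.symm.injective this

lemma perfect_homeo (E : α ≃ₜ β) [PerfectSpace α] : PerfectSpace β := by
  constructor
  intro y _
  rw [accPt_iff_nhds]
  intro U hU
  have hpre : E ⁻¹' U ∈ nhds (E.symm y) := by
    apply E.continuous.continuousAt.preimage_mem_nhds
    rw [E.apply_symm_apply]
    exact hU
  have h1 := PerfectSpace.univ_preperfect (E.symm y) (Set.mem_univ _)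
  rw [accPt_iff_nhds] at h1
  obtain ⟨x, ⟨hxU, -⟩, hxne⟩ := h1 _ hpre
  refine ⟨E x, ⟨hxU, Set.mem_univ _⟩, ?_⟩
  intro h
  apply hxne
  rw [← E.apply_symm_apply y] at h
  exact E.injective h

lemma infinite_of_perfect [T1Space α] [PerfectSpace α] [Nonempty α] : Infinite α := by
  by_contra h
  haveI : Finite α := not_infinite_iff_finite.mp h
  set x0 : α := Classical.arbitrary α
  have hopen : IsOpen ({x0} : Set α) := by
    rw [← isClosed_compl_iff]
    exact (Set.toFinite ({x0}ᶜ)).isClosed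
  have h1 := PerfectSpace.univ_preperfect x0 (Set.mem_univ _)
  rw [accPt_iff_nhds] at h1
  obtain ⟨y, ⟨hy, -⟩, hne⟩ := h1 {x0} (hopen.mem_nhds rfl)
  exact hne hy

/-- Conjugation by a homeomorphism, as a homomorphism of homeomorphism groups. -/
def conjHom (E : α ≃ₜ β) : (α ≃ₜ α) →* (β ≃ₜ β) where
  toFun f := (E.symm.trans f).trans E
  map_one' := by
    apply Homeomorph.ext
    intro x
    show E ((1 : α ≃ₜ α) (E.symm x)) = x
    rw [homeo_one_apply, E.apply_symm_apply]
  map_mul' f g := by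
    apply Homeomorph.ext
    intro x
    show E ((f * g) (E.symm x)) = E (f (E.symm (E (g (E.symm x)))))
    rw [homeo_mul_apply, E.symm_apply_apply]

lemma conjHom_apply (E : α ≃ₜ β) (f : α ≃ₜ α) (x : β) :
    conjHom E f x = E (f (E.symm x)) := rfl

lemma conjHom_injective (E : α ≃ₜ β) : Function.Injective (conjHom E) := by
  intro f g h
  apply Homeomorph.ext
  intro x
  have h1 := congrArg (fun k : β ≃ₜ β => k (E x)) h
  simp only [conjHom_apply, E.symm_apply_apply] at h1
  exact E.injective h1

end Helpers

end CantorEmb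

open CantorEmb

set_option synthInstance.maxHeartbeats 1000000 in
set_option maxHeartbeats 1600000 in
/-- Let `(X,T,G)` and `(Y,S,H)` be two aperiodic minimal Cantor systems,
`G` and `H` countable. Then there is a minimal Cantor `ℤ`-system `(Z,R,ℤ)` such that
`Aut(T,G) × Aut(S,H)` is isomorphic to a subgroup of `Aut(R,ℤ)`. -/
theorem product_of_centralizers_embeds_in_Z_centralizer
    {X : Type*} [TopologicalSpace X] [CompactSpace X] [MetrizableSpace X]
    [TotallyDisconnectedSpace X] [PerfectSpace X] [Nonempty X]
    {Y : Type*} [TopologicalSpace Y] [CompactSpace Y] [MetrizableSpace Y]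
    [TotallyDisconnectedSpace Y] [PerfectSpace Y] [Nonempty Y]
    {G : Type*} [Group G] [Countable G] {H : Type*} [Group H] [Countable H]
    (T : G →* (X ≃ₜ X)) (S : H →* (Y ≃ₜ Y))
    (hTfree : ∀ (g : G) (x : X), T g x = x → g = 1)
    (hTmin : ∀ x : X, Dense (Set.range fun g : G => T g x))
    (hSfree : ∀ (h : H) (y : Y), S h y = y → h = 1)
    (hSmin : ∀ y : Y, Dense (Set.range fun h : H => S h y)) :
    ∃ C : CantorZSys,
      (∀ z : C.X, Dense (Set.range fun n : ℤ => (C.S ^ n) z)) ∧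
      ∃ Φ : (↥(centralizerSub T) × ↥(centralizerSub S)) →* (C.X ≃ₜ C.X),
        Function.Injective Φ ∧
        ∀ (p : ↥(centralizerSub T) × ↥(centralizerSub S)) (z : C.X),
          Φ p (C.S z) = C.S (Φ p z) := by
  classical
  -- the product system
  set T' : (G × H) →* ((X × Y) ≃ₜ (X × Y)) :=
    { toFun := fun γ => (T γ.1).prodCongr (S γ.2)
      map_one' := by
        apply Homeomorph.ext
        intro p
        show ((T 1).prodCongr (S 1)) p = p
        rw [map_one, map_one]
        rfl
      map_mul' := by
        intro γ δ
        apply Homeomorph.ext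
        intro p
        show ((T (γ.1 * δ.1)).prodCongr (S (γ.2 * δ.2))) p =
          ((T γ.1).prodCongr (S γ.2)) (((T δ.1).prodCongr (S δ.2)) p)
        rw [map_mul, map_mul]
        rfl } with hT'
  have hmin' : ∀ p : X × Y, Dense (Set.range fun γ : G × H => T' γ p) := by
    intro p
    have h1 : (Set.range fun γ : G × H => T' γ p)
        = (Set.range fun g : G => T g p.1) ×ˢ (Set.range fun h : H => S h p.2) := by
      rw [← Set.range_prodMap]
      rfl
    rw [h1]
    exact (hTmin p.1).prod (hSmin p.2)
  -- move to a `Type 0` copy via the Kuratowski embedding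
  letI : MetricSpace (X × Y) := metrizableSpaceMetric (X × Y)
  have hiso := kuratowskiEmbedding.isometry (X × Y)
  set E0 : (X × Y) ≃ₜ ↥(Set.range (kuratowskiEmbedding (X × Y))) :=
    hiso.isEmbedding.toHomeomorph with hE0
  set Om : Type := ↥(Set.range (kuratowskiEmbedding (X × Y))) with hOm
  haveI : CompactSpace Om := E0.compactSpace
  haveI : TotallyDisconnectedSpace Om := td_homeo E0
  haveI : Nonempty Om := ⟨E0 (Classical.arbitrary _)⟩
  haveI : Infinite X := infinite_of_perfect
  haveI : Infinite (X × Y) := Prod.infinite_of_left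
  have hinfOm : Infinite Om := Infinite.of_injective E0 E0.injective
  -- transported action
  set A : (G × H) →* (Om ≃ₜ Om) := (conjHom E0).comp T' with hA
  have hminA : ∀ om : Om, Dense (Set.range fun γ : G × H => A γ om) := by
    intro om
    have h1 : (Set.range fun γ : G × H => A γ om)
        = E0 '' (Set.range fun γ : G × H => T' γ (E0.symm om)) := by
      rw [← Set.range_comp]
      rfl
    rw [h1]
    exact dense_image_homeo E0 (hmin' _)
  -- the commuting pair group
  set pairH : (↥(centralizerSub T) × ↥(centralizerSub S)) →* ((X × Y) ≃ₜ (X × Y)) :=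
    { toFun := fun p => (p.1.1 : X ≃ₜ X).prodCongr (p.2.1 : Y ≃ₜ Y)
      map_one' := by
        apply Homeomorph.ext
        intro q
        show (((1 : ↥(centralizerSub T)) : X ≃ₜ X) q.1,
              ((1 : ↥(centralizerSub S)) : Y ≃ₜ Y) q.2) = q
        rfl
      map_mul' := by
        intro p q
        apply Homeomorph.ext
        intro z
        show (((p.1 * q.1 : ↥(centralizerSub T)) : X ≃ₜ X) z.1,
              ((p.2 * q.2 : ↥(centralizerSub S)) : Y ≃ₜ Y) z.2) = _
        rfl } with hpairH
  set π : (↥(centralizerSub T) × ↥(centralizerSub S)) →* (Om ≃ₜ Om) :=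
    (conjHom E0).comp pairH with hπdef
  have hπinj : Function.Injective π := by
    rw [injective_iff_map_eq_one]
    intro p hp
    have hpair1 : pairH p = 1 := by
      apply conjHom_injective E0
      rw [map_one]
      exact hp
    have hx : ∀ x : X, (p.1 : X ≃ₜ X) x = x := by
      intro x
      have := congrArg (fun k : (X × Y) ≃ₜ (X × Y) => k (x, Classical.arbitrary Y)) hpair1
      exact congrArg Prod.fst this
    have hy : ∀ y : Y, (p.2 : Y ≃ₜ Y) y = y := by
      intro y
      have := congrArg (fun k : (X × Y) ≃ₜ (X × Y) => k (Classical.arbitrary X, y)) hpair1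
      exact congrArg Prod.snd this
    have h1 : p.1 = 1 := Subtype.ext (Homeomorph.ext hx)
    have h2 : p.2 = 1 := Subtype.ext (Homeomorph.ext hy)
    rw [Prod.ext_iff]
    exact ⟨h1, h2⟩
  have hcommπ : ∀ (p : ↥(centralizerSub T) × ↥(centralizerSub S)) (γ : G × H) (om : Om),
      π p (A γ om) = A γ (π p om) := by
    intro p γ om
    show conjHom E0 (pairH p) (conjHom E0 (T' γ) om) = conjHom E0 (T' γ) (conjHom E0 (pairH p) om)
    rw [conjHom_apply, conjHom_apply, conjHom_apply, conjHom_apply,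
      E0.symm_apply_apply, E0.symm_apply_apply]
    congr 1
    show pairH p (T' γ (E0.symm om)) = T' γ (pairH p (E0.symm om))
    obtain ⟨x, y⟩ := E0.symm om
    show ((p.1 : X ≃ₜ X) (T γ.1 x), (p.2 : Y ≃ₜ Y) (S γ.2 y))
        = (T γ.1 ((p.1 : X ≃ₜ X) x), S γ.2 ((p.2 : Y ≃ₜ Y) y))
    rw [p.1.2 γ.1 x, p.2.2 γ.2 y]
  obtain ⟨C, hCd, Φ, hΦinj, hΦcomm⟩ := master hinfOm A hminA π hπinj hcommπ
  exact ⟨C, hCd, Φ, hΦinj, hΦcomm⟩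
end
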